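/- arXiv:0909.1273 — 4 statements merged into one kernel-verified Lean document; each statement's English description precedes it below -/
import Mathlib

section
/- Let x < y < z be three consecutive elements of Ξ_n with y ∈ Θ_n, and write y = [[1; b_1, …, b_s]]. Then the mediant x ⊕ y equals [[1; b_1, …, b_s, 2]] and the mediant y ⊕ z equals [[1; b_1, …, b_s + 1]]. -/
/-!
Let `rrcfMatrix b` be the product of the matrices `!![c, -1; 1, 0]` over the entries `c` of `b`,
and `(A, C)` its first column. Then `[[1; b]] = (A - C) / A` in lowest terms, the determinant
being `1`, so `(A, C)` is the vector `(den, den - num)` of `[[1; b]]`. Taking mediants adds these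
vectors, while appending an entry to `b` multiplies `rrcfMatrix b` on the right; both formulas
thus become column identities once the neighbours of `y` are known. These are read off from the
fact that `b ↦ [[1; b]]` is strictly increasing for the lexicographic order in which a list lies
above its proper extensions: `z = [[1; b_1, …, b_{s-1}]]`, and `x = [[1; q, a]]` if
`b = q ++ (a + 1) :: [2, …, 2]` with `a ≥ 2`, while `x = 0` if all `b_i = 2`.
-/

open Set Filter

/-- The mediant of two rationals (written in lowest terms). -/
def mediant (x y : ℚ) : ℚ :=
  ((x.num + y.num : ℤ) : ℚ) / ((x.den + y.den : ℕ) : ℚ)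

/-- `x` and `y` are consecutive elements of the set `S`. -/
def IsConsecutive (S : Set ℚ) (x y : ℚ) : Prop :=
  x ∈ S ∧ y ∈ S ∧ x < y ∧ ∀ z ∈ S, ¬ (x < z ∧ z < y)

/-- The Stern–Brocot sequences `ℱ_n`. -/
def sternBrocot : ℕ → Set ℚ
  | 0 => {0, 1}
  | n + 1 => sternBrocot n ∪
      {z | ∃ x y : ℚ, IsConsecutive (sternBrocot n) x y ∧ z = mediant x y}

/-- `Q_n`, the set of mediants newly inserted at step `n ≥ 1` of the
Stern–Brocot construction. -/
def newMediants (n : ℕ) : Set ℚ :=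
  {z | ∃ x y : ℚ, IsConsecutive (sternBrocot (n - 1)) x y ∧ z = mediant x y}

/-- Value of the regular continued fraction `[0; a_1, …, a_m]`. -/
def cfVal : List ℕ → ℚ
  | [] => 0
  | a :: t => 1 / ((a : ℚ) + cfVal t)

/-- `a` is the regular continued fraction expansion `[0; a_1, …, a_m]` of `x`,
with all partial quotients positive and the last one at least `2`. -/
def IsCF (x : ℚ) (a : List ℕ) : Prop :=
  (∀ ai ∈ a, 1 ≤ ai) ∧ 2 ≤ a.getLastD 0 ∧ x = cfVal a

/-- Value of `b_1 - 1/(b_2 - ⋯ - 1/b_l)` (using the convention `1/0 = 0`,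
so that `rrTail [b] = b`). -/
def rrTail : List ℕ → ℚ
  | [] => 0
  | b :: t => (b : ℚ) - 1 / rrTail t

/-- Value of the regular reduced continued fraction
`[[1; b_1, …, b_l]] = 1 - 1/(b_1 - 1/(b_2 - ⋯ - 1/b_l))`. -/
def rrcfVal (b : List ℕ) : ℚ := 1 - 1 / rrTail b

/-- `b` is the regular reduced continued fraction expansion
`[[1; b_1, …, b_l]]` of `x`, with all entries at least `2`. -/
def IsRRCF (x : ℚ) (b : List ℕ) : Prop :=
  (∀ bi ∈ b, 2 ≤ bi) ∧ x = rrcfVal b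

/-- `Θ_k`: rationals in `(0,1)` whose regular reduced continued fraction
expansion satisfies `L(x) = b_1 + ⋯ + b_l = k + 1`. -/
def Theta (k : ℕ) : Set ℚ :=
  {x | x ∈ Set.Ioo (0 : ℚ) 1 ∧ ∃ b : List ℕ, IsRRCF x b ∧ b.sum = k + 1}

/-- `Ξ_n = {0, 1} ∪ Θ_1 ∪ ⋯ ∪ Θ_n`. -/
def Xi (n : ℕ) : Set ℚ :=
  {0, 1} ∪ ⋃ k ∈ Finset.Icc 1 n, Theta k

open Matrix

def rrcfStep (c : ℕ) : Matrix (Fin 2) (Fin 2) ℤ := !![(c : ℤ), -1; 1, 0]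

def rrcfMatrix (b : List ℕ) : Matrix (Fin 2) (Fin 2) ℤ := (b.map rrcfStep).prod

@[simp] lemma rrcfMatrix_nil : rrcfMatrix [] = 1 := rfl

@[simp] lemma rrcfMatrix_cons (c : ℕ) (t : List ℕ) :
    rrcfMatrix (c :: t) = rrcfStep c * rrcfMatrix t := rfl

@[simp] lemma rrcfMatrix_append (s t : List ℕ) :
    rrcfMatrix (s ++ t) = rrcfMatrix s * rrcfMatrix t := by
  simp [rrcfMatrix]

lemma rrcfMatrix_singleton (c : ℕ) : rrcfMatrix [c] = rrcfStep c := by simp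

@[simp] lemma rrcfMatrix_cons_zero_zero (c : ℕ) (t : List ℕ) :
    rrcfMatrix (c :: t) 0 0 = c * rrcfMatrix t 0 0 - rrcfMatrix t 1 0 := by
  simp [rrcfStep, mul_apply, sub_eq_add_neg]

@[simp] lemma rrcfMatrix_cons_one_zero (c : ℕ) (t : List ℕ) :
    rrcfMatrix (c :: t) 1 0 = rrcfMatrix t 0 0 := by
  simp [rrcfStep, mul_apply]

lemma rrcfStep_mulVec (c : ℕ) (u v : ℤ) : rrcfStep c *ᵥ ![u, v] = ![c * u - v, u] := by
  ext i; fin_cases i <;> simp [rrcfStep]; ring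

lemma det_rrcfMatrix (b : List ℕ) : (rrcfMatrix b).det = 1 := by
  induction b with
  | nil => simp
  | cons c t ih => rw [rrcfMatrix_cons, det_mul, ih, rrcfStep, det_fin_two_of]; simp

lemma rrcfMatrix_col_bounds {b : List ℕ} (hb : ∀ k ∈ b, 2 ≤ k) :
    0 ≤ rrcfMatrix b 1 0 ∧ rrcfMatrix b 1 0 < rrcfMatrix b 0 0 := by
  induction b with
  | nil => simp
  | cons c t ih =>
    obtain ⟨hc, ht⟩ := List.forall_mem_cons.1 hb
    obtain ⟨h0, h1⟩ := ih ht
    have hc : (2 : ℤ) ≤ c := by exact_mod_cast hc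
    rw [rrcfMatrix_cons_zero_zero, rrcfMatrix_cons_one_zero]
    constructor <;> nlinarith

lemma rrTail_eq_div {b : List ℕ} (hb : ∀ k ∈ b, 2 ≤ k) :
    rrTail b = rrcfMatrix b 0 0 / rrcfMatrix b 1 0 := by
  induction b with
  | nil => simp [rrTail]
  | cons c t ih =>
    have ht := (List.forall_mem_cons.1 hb).2
    have hA : (rrcfMatrix t 0 0 : ℚ) ≠ 0 := by
      obtain ⟨h0, h1⟩ := rrcfMatrix_col_bounds ht
      exact_mod_cast (h0.trans_lt h1).ne'
    rw [rrTail, ih ht, rrcfMatrix_cons_zero_zero, rrcfMatrix_cons_one_zero]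
    push_cast
    field_simp

def ratVec (q : ℚ) : Fin 2 → ℤ := ![q.den, q.den - q.num]

lemma ratVec_zero : ratVec 0 = ![1, 1] := by simp [ratVec]

lemma ratVec_intCast_div {A C : ℤ} (hA : 0 < A) (hcop : IsCoprime C A) :
    ratVec ((A - C : ℤ) / A) = ![A, C] := by
  have hcop' : Nat.Coprime (A - C).natAbs A.natAbs := by
    obtain ⟨u, v, huv⟩ := hcop
    exact Int.isCoprime_iff_gcd_eq_one.mp ⟨-u, v + u, by linear_combination huv⟩
  simp only [ratVec, Rat.num_div_eq_of_coprime hA hcop', Rat.den_div_eq_of_coprime hA hcop']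
  ring_nf

lemma ratVec_rrcfVal {b : List ℕ} (hb : ∀ k ∈ b, 2 ≤ k) :
    ratVec (rrcfVal b) = rrcfMatrix b *ᵥ ![1, 0] := by
  obtain ⟨hC, hCA⟩ := rrcfMatrix_col_bounds hb
  have hA := hC.trans_lt hCA
  have hdet : rrcfMatrix b 0 0 * rrcfMatrix b 1 1 - rrcfMatrix b 0 1 * rrcfMatrix b 1 0 = 1 := by
    rw [← det_fin_two, det_rrcfMatrix]
  have hval : rrcfVal b =
      ((rrcfMatrix b 0 0 - rrcfMatrix b 1 0 : ℤ) : ℚ) / (rrcfMatrix b 0 0 : ℤ) := by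
    have : (rrcfMatrix b 0 0 : ℚ) ≠ 0 := by exact_mod_cast hA.ne'
    rw [rrcfVal, rrTail_eq_div hb]
    field_simp
    push_cast
    ring
  rw [hval, ratVec_intCast_div hA
    ⟨-rrcfMatrix b 0 1, rrcfMatrix b 1 1, by linear_combination hdet⟩]
  ext i; fin_cases i <;> simp [mulVec, dotProduct]

lemma mediant_eq_of_ratVec_add {u v w : ℚ} (h : ratVec u + ratVec v = ratVec w) :
    mediant u v = w := by
  have hden := congrFun h 0
  have hnum := congrFun h 1
  simp only [ratVec, Pi.add_apply, cons_val_zero, cons_val_one] at hden hnum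
  have hden' : u.den + v.den = w.den := by exact_mod_cast hden
  rw [mediant, hden', show u.num + v.num = w.num by linear_combination hden - hnum]
  exact_mod_cast w.num_div_den

lemma mediant_rrcfVal_append_two {x : ℚ} {b : List ℕ} (hb : ∀ k ∈ b, 2 ≤ k)
    (hx : ratVec x = rrcfMatrix b *ᵥ ![1, 1]) : mediant x (rrcfVal b) = rrcfVal (b ++ [2]) := by
  have hb2 : ∀ k ∈ b ++ [2], 2 ≤ k :=
    List.forall_mem_append.2 ⟨hb, List.forall_mem_singleton.2 le_rfl⟩
  apply mediant_eq_of_ratVec_add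
  rw [hx, ratVec_rrcfVal hb, ratVec_rrcfVal hb2, rrcfMatrix_append, rrcfMatrix_singleton,
    ← mulVec_mulVec, rrcfStep_mulVec, ← mulVec_add]
  congr 1; ext i; fin_cases i <;> simp

lemma mediant_rrcfVal_append_succ {d : List ℕ} {g : ℕ} (hb : ∀ k ∈ d ++ [g], 2 ≤ k) :
    mediant (rrcfVal (d ++ [g])) (rrcfVal d) = rrcfVal (d ++ [g + 1]) := by
  obtain ⟨hd, hg⟩ := List.forall_mem_append.1 hb
  have hg' : ∀ k ∈ d ++ [g + 1], 2 ≤ k := List.forall_mem_append.2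
    ⟨hd, List.forall_mem_singleton.2 ((List.forall_mem_singleton.1 hg).trans g.le_succ)⟩
  apply mediant_eq_of_ratVec_add
  rw [ratVec_rrcfVal hb, ratVec_rrcfVal hd, ratVec_rrcfVal hg', rrcfMatrix_append,
    rrcfMatrix_append, rrcfMatrix_singleton, rrcfMatrix_singleton, ← mulVec_mulVec,
    ← mulVec_mulVec, rrcfStep_mulVec, rrcfStep_mulVec, ← mulVec_add]
  congr 1; ext i; fin_cases i <;> simp

lemma rrcfMatrix_replicate_two_mulVec (m : ℕ) :
    rrcfMatrix (List.replicate m 2) *ᵥ ![1, 1] = ![1, 1] := by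
  induction m with
  | zero => simp
  | succ m ih =>
    rw [List.replicate_succ, rrcfMatrix_cons, ← mulVec_mulVec, ih, rrcfStep_mulVec]
    norm_num

lemma rrcfMatrix_append_succ_replicate_mulVec (q : List ℕ) (a m : ℕ) :
    rrcfMatrix (q ++ (a + 1) :: List.replicate m 2) *ᵥ ![1, 1] =
      rrcfMatrix (q ++ [a]) *ᵥ ![1, 0] := by
  rw [rrcfMatrix_append, rrcfMatrix_cons, rrcfMatrix_append, rrcfMatrix_singleton,
    ← mulVec_mulVec, ← mulVec_mulVec, ← mulVec_mulVec, rrcfMatrix_replicate_two_mulVec,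
    rrcfStep_mulVec, rrcfStep_mulVec]
  congr 1; ext i; fin_cases i <;> simp

lemma rrcfVal_cons (c : ℕ) (t : List ℕ) : rrcfVal (c :: t) = 1 - 1 / (c + rrcfVal t - 1) := by
  simp only [rrcfVal, rrTail]
  ring

lemma rrcfVal_cons_mem_Ioo {c : ℕ} {t : List ℕ} (hc : 2 ≤ c) (ht : rrcfVal t ∈ Ioc 0 1) :
    rrcfVal (c :: t) ∈ Ioo 0 1 := by
  have hc : (2 : ℚ) ≤ c := by exact_mod_cast hc
  have hs : 1 < (c : ℚ) + rrcfVal t - 1 := by linarith [ht.1]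
  rw [rrcfVal_cons]
  constructor
  · linarith [(div_lt_one (by linarith)).2 hs]
  · linarith [one_div_pos.2 (by linarith : (0 : ℚ) < c + rrcfVal t - 1)]

lemma rrcfVal_mem_Ioc {b : List ℕ} (hb : ∀ k ∈ b, 2 ≤ k) : rrcfVal b ∈ Ioc 0 1 := by
  induction b with
  | nil => simp [rrcfVal, rrTail]
  | cons c t ih =>
    obtain ⟨hc, ht⟩ := List.forall_mem_cons.1 hb
    exact Ioo_subset_Ioc_self (rrcfVal_cons_mem_Ioo hc (ih ht))

lemma rrcfVal_mem_Ioo {b : List ℕ} (hb : ∀ k ∈ b, 2 ≤ k) (hne : b ≠ []) :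
    rrcfVal b ∈ Ioo 0 1 := by
  obtain ⟨c, t, rfl⟩ := List.exists_cons_of_ne_nil hne
  obtain ⟨hc, ht⟩ := List.forall_mem_cons.1 hb
  exact rrcfVal_cons_mem_Ioo hc (rrcfVal_mem_Ioc ht)

def RRCFLt : List ℕ → List ℕ → Prop
  | [], _ => False
  | _ :: _, [] => True
  | i :: t, j :: u => i < j ∨ i = j ∧ RRCFLt t u

lemma RRCFLt.ne_nil {c e : List ℕ} (h : RRCFLt c e) : c ≠ [] := by
  rintro rfl
  exact h

lemma RRCFLt.trichotomous : ∀ {c e : List ℕ}, c ≠ e → RRCFLt c e ∨ RRCFLt e c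
  | [], [], h => absurd rfl h
  | _ :: _, [], _ => Or.inl trivial
  | [], _ :: _, _ => Or.inr trivial
  | i :: t, j :: u, h => by
    rcases lt_trichotomy i j with hij | rfl | hij
    · exact Or.inl (Or.inl hij)
    · rcases trichotomous (fun htu => h (htu ▸ rfl) : t ≠ u) with htu | hut
      · exact Or.inl (Or.inr ⟨rfl, htu⟩)
      · exact Or.inr (Or.inr ⟨rfl, hut⟩)
    · exact Or.inr (Or.inl hij)

lemma RRCFLt.append_left_iff (q : List ℕ) {s t : List ℕ} :
    RRCFLt (q ++ s) (q ++ t) ↔ RRCFLt s t := by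
  induction q with
  | nil => rfl
  | cons i q ih => simp [RRCFLt, ih]

lemma RRCFLt.exists_eq_append_of_between {q s t c : List ℕ} (hs : RRCFLt (q ++ s) c)
    (ht : RRCFLt c (q ++ t)) : ∃ r, c = q ++ r ∧ RRCFLt s r ∧ RRCFLt r t := by
  induction q generalizing c with
  | nil => exact ⟨c, rfl, hs, ht⟩
  | cons i q ih =>
    cases c with
    | nil => exact ht.elim
    | cons j u =>
      obtain hij | ⟨rfl, hs⟩ := hs
      · obtain hji | ⟨rfl, -⟩ := ht <;> omega
      · obtain hji | ⟨-, ht⟩ := ht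
        · omega
        · obtain ⟨r, rfl, hsr, hrt⟩ := ih hs ht
          exact ⟨r, rfl, hsr, hrt⟩

lemma RRCFLt.two_mul_add_two_le_sum {r : List ℕ} (hr : ∀ k ∈ r, 2 ≤ k) {m : ℕ}
    (h : RRCFLt r (List.replicate m 2)) : 2 * m + 2 ≤ r.sum := by
  cases r with
  | nil => exact h.elim
  | cons j u =>
    obtain ⟨hj, hu⟩ := List.forall_mem_cons.1 hr
    rw [List.sum_cons]
    cases m with
    | zero => omega
    | succ m =>
      obtain hj2 | ⟨rfl, hu2⟩ := h
      · omega
      · have := two_mul_add_two_le_sum hu hu2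
        omega

lemma natCast_add_lt_natCast_add_iff {i j : ℕ} {v w : ℚ} (hv : v ∈ Ioc 0 1)
    (hw : w ∈ Ioc 0 1) : (i : ℚ) + v < j + w ↔ i < j ∨ i = j ∧ v < w := by
  rcases lt_trichotomy i j with hij | rfl | hij
  · have : (i : ℚ) + 1 ≤ j := by exact_mod_cast hij
    exact iff_of_true (by linarith [hv.2, hw.1]) (Or.inl hij)
  · simp
  · have : (j : ℚ) + 1 ≤ i := by exact_mod_cast hij
    exact iff_of_false (by linarith [hv.1, hw.2]) (by omega)

lemma rrcfVal_lt_rrcfVal_iff {c e : List ℕ} (hc : ∀ k ∈ c, 2 ≤ k) (he : ∀ k ∈ e, 2 ≤ k) :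
    rrcfVal c < rrcfVal e ↔ RRCFLt c e := by
  induction c generalizing e with
  | nil => simpa [RRCFLt, rrcfVal, rrTail] using (rrcfVal_mem_Ioc he).2
  | cons i t ih =>
    obtain ⟨hi, ht⟩ := List.forall_mem_cons.1 hc
    cases e with
    | nil => simpa [RRCFLt, rrcfVal, rrTail] using (rrcfVal_mem_Ioo hc (List.cons_ne_nil i t)).2
    | cons j u =>
      obtain ⟨hj, hu⟩ := List.forall_mem_cons.1 he
      have hpos : ∀ (k : ℕ) (s : List ℕ), 2 ≤ k → (∀ l ∈ s, 2 ≤ l) →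
          0 < (k : ℚ) + rrcfVal s - 1 := by
        intro k s hk hs
        have : (2 : ℚ) ≤ k := by exact_mod_cast hk
        linarith [(rrcfVal_mem_Ioc hs).1]
      rw [rrcfVal_cons, rrcfVal_cons, sub_lt_sub_iff_left,
        one_div_lt_one_div (hpos j u hj hu) (hpos i t hi ht), sub_lt_sub_iff_right,
        natCast_add_lt_natCast_add_iff (rrcfVal_mem_Ioc ht) (rrcfVal_mem_Ioc hu), ih ht hu]
      rfl

lemma rrcfVal_injOn : Set.InjOn rrcfVal {b | ∀ k ∈ b, 2 ≤ k} := by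
  intro c hc e he h
  by_contra hne
  rcases RRCFLt.trichotomous hne with hce | hec
  · exact ((rrcfVal_lt_rrcfVal_iff hc he).2 hce).ne h
  · exact ((rrcfVal_lt_rrcfVal_iff he hc).2 hec).ne' h

lemma two_le_sum {c : List ℕ} (hc : ∀ k ∈ c, 2 ≤ k) (hne : c ≠ []) : 2 ≤ c.sum :=
  (hc _ (List.head_mem hne)).trans (List.le_sum_of_mem (List.head_mem hne))

lemma mem_Xi_iff {n : ℕ} {w : ℚ} :
    w ∈ Xi n ↔ w = 0 ∨ ∃ c : List ℕ, (∀ k ∈ c, 2 ≤ k) ∧ c.sum ≤ n + 1 ∧ rrcfVal c = w := by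
  simp only [Xi, Theta, IsRRCF, mem_union, mem_insert_iff, mem_singleton_iff, mem_iUnion,
    Finset.mem_Icc, mem_ofPred_eq, exists_prop]
  constructor
  · rintro ((rfl | rfl) | ⟨k, hk, -, c, ⟨hc, rfl⟩, hsum⟩)
    · exact Or.inl rfl
    · exact Or.inr ⟨[], by simp, by simp, by simp [rrcfVal, rrTail]⟩
    · exact Or.inr ⟨c, hc, by omega, rfl⟩
  · rintro (rfl | ⟨c, hc, hsum, rfl⟩)
    · exact Or.inl (Or.inl rfl)
    rcases eq_or_ne c [] with rfl | hne
    · exact Or.inl (Or.inr (by simp [rrcfVal, rrTail]))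
    · have := two_le_sum hc hne
      exact Or.inr ⟨c.sum - 1, by omega, rrcfVal_mem_Ioo hc hne, c, ⟨hc, rfl⟩, by omega⟩

lemma rrcfVal_mem_Xi {n : ℕ} {c : List ℕ} (hc : ∀ k ∈ c, 2 ≤ k) (hsum : c.sum ≤ n + 1) :
    rrcfVal c ∈ Xi n :=
  mem_Xi_iff.2 (Or.inr ⟨c, hc, hsum, rfl⟩)

lemma sum_eq_of_rrcfVal_mem_Theta {n : ℕ} {b : List ℕ} (hb : ∀ k ∈ b, 2 ≤ k)
    (hy : rrcfVal b ∈ Theta n) : b.sum = n + 1 := by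
  obtain ⟨-, c, ⟨hc, hcb⟩, hsum⟩ := hy
  rwa [← rrcfVal_injOn hc hb hcb.symm]

lemma IsConsecutive.left_unique {S : Set ℚ} {x x' y : ℚ} (h : IsConsecutive S x y)
    (h' : IsConsecutive S x' y) : x = x' := by
  obtain ⟨hx, -, hxy, hS⟩ := h
  obtain ⟨hx', -, hx'y, hS'⟩ := h'
  by_contra hne
  rcases lt_or_gt_of_ne hne with hlt | hlt
  · exact hS x' hx' ⟨hlt, hx'y⟩
  · exact hS' x hx ⟨hlt, hxy⟩

lemma IsConsecutive.right_unique {S : Set ℚ} {x y y' : ℚ} (h : IsConsecutive S x y)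
    (h' : IsConsecutive S x y') : y = y' := by
  obtain ⟨-, hy, hxy, hS⟩ := h
  obtain ⟨-, hy', hxy', hS'⟩ := h'
  by_contra hne
  rcases lt_or_gt_of_ne hne with hlt | hlt
  · exact hS' y hy ⟨hxy, hlt⟩
  · exact hS y' hy' ⟨hxy', hlt⟩

lemma isConsecutive_Xi {n : ℕ} {u v : ℚ} (hu : u ∈ Xi n) (hv : v ∈ Xi n) (huv : u < v)
    (hgap : ∀ c : List ℕ, (∀ k ∈ c, 2 ≤ k) → u < rrcfVal c → rrcfVal c < v → n + 1 < c.sum) :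
    IsConsecutive (Xi n) u v := by
  refine ⟨hu, hv, huv, fun w hw ⟨huw, hwv⟩ => ?_⟩
  obtain rfl | ⟨c, hc, hsum, rfl⟩ := mem_Xi_iff.1 hw
  · obtain rfl | ⟨c, hc, -, rfl⟩ := mem_Xi_iff.1 hu
    · exact huw.false
    · exact (rrcfVal_mem_Ioc hc).1.not_gt huw
  · exact (hgap c hc huw hwv).not_ge hsum

lemma isConsecutive_rrcfVal_append_singleton {n : ℕ} {d : List ℕ} {g : ℕ}
    (hb : ∀ k ∈ d ++ [g], 2 ≤ k) (hsum : (d ++ [g]).sum = n + 1) :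
    IsConsecutive (Xi n) (rrcfVal (d ++ [g])) (rrcfVal d) := by
  have hd := (List.forall_mem_append.1 hb).1
  have hlen : d.sum + g = n + 1 := by rwa [List.sum_append, List.sum_singleton] at hsum
  have hlt : RRCFLt (d ++ [g]) (d ++ []) := (RRCFLt.append_left_iff d).2 trivial
  rw [List.append_nil] at hlt
  refine isConsecutive_Xi (rrcfVal_mem_Xi hb hsum.le) (rrcfVal_mem_Xi hd (by omega))
    ((rrcfVal_lt_rrcfVal_iff hb hd).2 hlt) fun c hc hbc hcd => ?_
  rw [rrcfVal_lt_rrcfVal_iff hb hc] at hbc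
  rw [rrcfVal_lt_rrcfVal_iff hc hd, ← List.append_nil d] at hcd
  obtain ⟨r, rfl, hgr, hr⟩ := RRCFLt.exists_eq_append_of_between hbc hcd
  obtain ⟨j, u, rfl⟩ := List.exists_cons_of_ne_nil hr.ne_nil
  obtain hgj | ⟨-, hu⟩ := hgr
  · rw [List.sum_append, List.sum_cons]
    omega
  · exact hu.elim

lemma isConsecutive_zero_rrcfVal_replicate {n m : ℕ}
    (hsum : (List.replicate m 2).sum = n + 1) :
    IsConsecutive (Xi n) 0 (rrcfVal (List.replicate m 2)) := by
  have hrep : ∀ k ∈ List.replicate m 2, 2 ≤ k := fun k hk => (List.eq_of_mem_replicate hk).ge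
  refine isConsecutive_Xi (mem_Xi_iff.2 (Or.inl rfl)) (rrcfVal_mem_Xi hrep hsum.le)
    (rrcfVal_mem_Ioc hrep).1 fun c hc _ hcb => ?_
  have := RRCFLt.two_mul_add_two_le_sum hc ((rrcfVal_lt_rrcfVal_iff hc hrep).1 hcb)
  rw [List.sum_replicate, smul_eq_mul] at hsum
  omega

lemma isConsecutive_rrcfVal_append_replicate {n : ℕ} {q : List ℕ} {a m : ℕ}
    (hq : ∀ k ∈ q, 2 ≤ k) (ha : 2 ≤ a)
    (hsum : (q ++ (a + 1) :: List.replicate m 2).sum = n + 1) :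
    IsConsecutive (Xi n) (rrcfVal (q ++ [a])) (rrcfVal (q ++ (a + 1) :: List.replicate m 2)) := by
  have hqa : ∀ k ∈ q ++ [a], 2 ≤ k :=
    List.forall_mem_append.2 ⟨hq, List.forall_mem_singleton.2 ha⟩
  have hb : ∀ k ∈ q ++ (a + 1) :: List.replicate m 2, 2 ≤ k := by
    simp only [List.forall_mem_append, List.forall_mem_cons, List.mem_replicate]
    exact ⟨hq, by omega, fun k hk => hk.2.ge⟩
  have hlen : q.sum + (a + 1 + 2 * m) = n + 1 := by
    rwa [List.sum_append, List.sum_cons, List.sum_replicate, smul_eq_mul, mul_comm] at hsum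
  refine isConsecutive_Xi
    (rrcfVal_mem_Xi hqa (by rw [List.sum_append, List.sum_singleton]; omega))
    (rrcfVal_mem_Xi hb hsum.le)
    ((rrcfVal_lt_rrcfVal_iff hqa hb).2 ((RRCFLt.append_left_iff q).2 (Or.inl a.lt_succ_self)))
    fun c hc hxc hcy => ?_
  rw [rrcfVal_lt_rrcfVal_iff hqa hc] at hxc
  rw [rrcfVal_lt_rrcfVal_iff hc hb] at hcy
  obtain ⟨r, rfl, har, hr⟩ := RRCFLt.exists_eq_append_of_between hxc hcy
  obtain ⟨j, u, rfl⟩ := List.exists_cons_of_ne_nil hr.ne_nil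
  obtain ⟨-, hu⟩ := List.forall_mem_cons.1 (List.forall_mem_append.1 hc).2
  obtain haj | ⟨-, hu'⟩ := har
  · obtain hja | ⟨rfl, hum⟩ := hr
    · omega
    · have := hum.two_mul_add_two_le_sum hu
      rw [List.sum_append, List.sum_cons]
      omega
  · exact hu'.elim

lemma eq_replicate_or_eq_append_succ_replicate {b : List ℕ} (hb : ∀ k ∈ b, 2 ≤ k) :
    (∃ m, b = List.replicate m 2) ∨
      ∃ q a m, (∀ k ∈ q, 2 ≤ k) ∧ 2 ≤ a ∧ b = q ++ (a + 1) :: List.replicate m 2 := by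
  induction b with
  | nil => exact Or.inl ⟨0, rfl⟩
  | cons c t ih =>
    obtain ⟨hc, ht⟩ := List.forall_mem_cons.1 hb
    obtain ⟨m, rfl⟩ | ⟨q, a, m, hq, ha, rfl⟩ := ih ht
    · rcases hc.eq_or_lt with rfl | hc
      · exact Or.inl ⟨m + 1, rfl⟩
      · refine Or.inr ⟨[], c - 1, m, by simp, by omega, ?_⟩
        rw [List.nil_append, Nat.sub_add_cancel (by omega : 1 ≤ c)]
    · exact Or.inr ⟨c :: q, a, m, List.forall_mem_cons.2 ⟨hc, hq⟩, ha, rfl⟩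

lemma exists_isConsecutive_Xi_ratVec_eq {n : ℕ} {b : List ℕ} (hb : ∀ k ∈ b, 2 ≤ k)
    (hsum : b.sum = n + 1) :
    ∃ x, IsConsecutive (Xi n) x (rrcfVal b) ∧ ratVec x = rrcfMatrix b *ᵥ ![1, 1] := by
  obtain ⟨m, rfl⟩ | ⟨q, a, m, hq, ha, rfl⟩ := eq_replicate_or_eq_append_succ_replicate hb
  · exact ⟨0, isConsecutive_zero_rrcfVal_replicate hsum,
      by rw [ratVec_zero, rrcfMatrix_replicate_two_mulVec]⟩
  · exact ⟨_, isConsecutive_rrcfVal_append_replicate hq ha hsum, by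
      rw [ratVec_rrcfVal (List.forall_mem_append.2 ⟨hq, List.forall_mem_singleton.2 ha⟩),
        rrcfMatrix_append_succ_replicate_mulVec]⟩

/-- if `x < y < z` are consecutive in `Ξ_n` with
`y = [[1; b_1, …, b_s]] ∈ Θ_n`, then `x ⊕ y = [[1; b_1, …, b_s, 2]]` and
`y ⊕ z = [[1; b_1, …, b_s + 1]]`. -/
theorem mediant_rrcf_formula
    (n : ℕ) (x y z : ℚ)
    (hxy : IsConsecutive (Xi n) x y) (hyz : IsConsecutive (Xi n) y z)
    (hy : y ∈ Theta n)
    (b : List ℕ) (hbne : b ≠ []) (hb : IsRRCF y b) :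
    mediant x y = rrcfVal (b ++ [2]) ∧
      mediant y z = rrcfVal (b.dropLast ++ [b.getLast hbne + 1]) := by
  obtain ⟨hb, rfl⟩ := hb
  have hsum := sum_eq_of_rrcfVal_mem_Theta hb hy
  constructor
  · obtain ⟨x', hx'y, hx'⟩ := exists_isConsecutive_Xi_ratVec_eq hb hsum
    rw [hxy.left_unique hx'y]
    exact mediant_rrcfVal_append_two hb hx'
  · set d := b.dropLast
    set g := b.getLast hbne
    have hdg : d ++ [g] = b := List.dropLast_append_getLast hbne
    rw [← hdg] at hb hsum hyz ⊢
    rw [hyz.right_unique (isConsecutive_rrcfVal_append_singleton hb hsum)]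
    exact mediant_rrcfVal_append_succ hb
end

section
/- Let x < y be two consecutive elements of Ξ_n (n ≥ 1) and suppose the mediant x ⊕ y belongs to Θ_k. Then for every m ≥ k, #{ ξ ∈ Ξ_m : x < ξ ≤ y } = F_{m−k+3}. -/
open Set Filter

/-!
Expansions `b` (all digits `≥ 2`) form a binary tree: the children of `i ++ [g]` are
`i ++ [g, 2]` and `i ++ [g + 1]`, whose digit sums are larger by `2` and by `1`. Products of the
unimodular matrices `!![1, c - 2; 1, c - 1]` show that `rrcfVal (i ++ [g])` is the mediant of two
Farey neighbours, its parents `rrcfVal i` and the image of `0/1`, and that its two children split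
the interval between the parents at this mediant. Since fractions strictly between Farey
neighbours have larger denominators, every expansion whose value lies between the parents of `b`
descends from `b`. Hence consecutive elements of `Ξ_n` are the parents of the expansion of least
digit sum between them, which is their mediant, and counting the subtree of `b` down to level `m`
gives the recursion `N(s) = 1 + N(s + 1) + N(s + 2)` of the Fibonacci numbers.
-/

namespace RRCF

def Digits (b : List ℕ) : Prop := ∀ d ∈ b, 2 ≤ d

/-- The unimodular matrix `!![1, c - 2; 1, c - 1]` acting on a numerator–denominator pair; on
values it is `v ↦ 1 - 1 / (c - 1 + v)`, the step of `rrcfVal`. -/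
def act (c : ℕ) (v : ℤ × ℤ) : ℤ × ℤ := (v.1 + (c - 2) * v.2, v.1 + (c - 1) * v.2)

def det (u v : ℤ × ℤ) : ℤ := u.1 * v.2 - v.1 * u.2

def toRat (v : ℤ × ℤ) : ℚ := v.1 / v.2

def numDen (b : List ℕ) : ℤ × ℤ := b.foldr act (1, 1)

def leftNumDen (b : List ℕ) : ℤ × ℤ := b.foldr act (0, 1)

def leftParent (b : List ℕ) : ℚ := toRat (leftNumDen b)

def rightParent (b : List ℕ) : ℚ := rrcfVal b.dropLast

lemma Digits.of_cons {c : ℕ} {t : List ℕ} (h : Digits (c :: t)) : 2 ≤ c ∧ Digits t :=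
  ⟨h c List.mem_cons_self, fun d hd => h d (List.mem_cons_of_mem _ hd)⟩

lemma Digits.of_concat {i : List ℕ} {g : ℕ} (h : Digits (i ++ [g])) : Digits i ∧ 2 ≤ g :=
  ⟨fun d hd => h d (List.mem_append_left _ hd), h g (by simp)⟩

lemma Digits.concat {i : List ℕ} {g : ℕ} (hi : Digits i) (hg : 2 ≤ g) :
    Digits (i ++ [g]) := by
  intro d hd
  rcases List.mem_append.1 hd with hd | hd
  · exact hi d hd
  · rw [List.mem_singleton.1 hd]; exact hg

lemma sum_append_singleton (i : List ℕ) (g : ℕ) : (i ++ [g]).sum = i.sum + g := by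
  simp only [List.sum_append, List.sum_singleton]

lemma act_add (c : ℕ) (u v : ℤ × ℤ) : act c (u + v) = act c u + act c v := by
  simp only [act, Prod.fst_add, Prod.snd_add, Prod.mk_add_mk]; ring_nf

lemma foldr_act_add (b : List ℕ) (u v : ℤ × ℤ) :
    b.foldr act (u + v) = b.foldr act u + b.foldr act v := by
  induction b with
  | nil => rfl
  | cons c t ih => simp only [List.foldr_cons, ih, act_add]

lemma det_act (c : ℕ) (u v : ℤ × ℤ) : det (act c u) (act c v) = det u v := by
  simp only [det, act]; ring

lemma det_foldr_act (b : List ℕ) (u v : ℤ × ℤ) :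
    det (b.foldr act u) (b.foldr act v) = det u v := by
  induction b with
  | nil => rfl
  | cons c t ih => simp only [List.foldr_cons, det_act, ih]

lemma det_add_right (u v w : ℤ × ℤ) : det u (v + w) = det u v + det u w := by
  simp only [det, Prod.fst_add, Prod.snd_add]; ring

lemma det_add_left (u v w : ℤ × ℤ) : det (u + v) w = det u w + det v w := by
  simp only [det, Prod.fst_add, Prod.snd_add]; ring

lemma det_self (u : ℤ × ℤ) : det u u = 0 := by
  simp only [det]; ring

lemma foldr_act_nonneg {b : List ℕ} (hb : Digits b) {v : ℤ × ℤ} (h1 : 0 ≤ v.1)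
    (h2 : 0 < v.2) :
    0 ≤ (b.foldr act v).1 ∧ 0 < (b.foldr act v).2 := by
  induction b with
  | nil => exact ⟨h1, h2⟩
  | cons c t ih =>
    obtain ⟨hc, ht⟩ := hb.of_cons
    obtain ⟨ih1, ih2⟩ := ih ht
    have hc' : (2 : ℤ) ≤ c := by exact_mod_cast hc
    constructor <;> simp only [List.foldr_cons, act] <;> nlinarith

lemma toRat_lt_toRat {u v : ℤ × ℤ} (hu : 0 < u.2) (hv : 0 < v.2) (h : 0 < det v u) :
    toRat u < toRat v := by
  unfold toRat det at *
  rw [div_lt_div_iff₀ (by exact_mod_cast hu) (by exact_mod_cast hv)]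
  exact_mod_cast (by linarith : u.1 * v.2 < v.1 * u.2)

lemma toRat_act {c : ℕ} (hc : 2 ≤ c) {v : ℤ × ℤ} (h1 : 0 ≤ v.1) (h2 : 0 < v.2) :
    toRat (act c v) = 1 - 1 / ((c : ℚ) - 1 + toRat v) := by
  have hc' : (2 : ℚ) ≤ c := by exact_mod_cast hc
  have h1' : (0 : ℚ) ≤ v.1 := by exact_mod_cast h1
  have h2' : (0 : ℚ) < v.2 := by exact_mod_cast h2
  have hne : (v.1 : ℚ) + (c - 1) * v.2 ≠ 0 := by nlinarith
  have hv : (c : ℚ) - 1 + v.1 / v.2 = (v.1 + (c - 1) * v.2) / v.2 := by field_simp; ring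
  unfold toRat act
  push_cast
  rw [hv, one_div_div, eq_sub_iff_add_eq, ← add_div, div_eq_one_iff_eq hne]
  ring

lemma isCoprime_of_det_eq_one {u v : ℤ × ℤ} (h : det u v = 1) :
    IsCoprime u.1 u.2 ∧ IsCoprime v.1 v.2 :=
  ⟨⟨v.2, -v.1, by unfold det at h; linarith⟩, ⟨-u.2, u.1, by unfold det at h; linarith⟩⟩

lemma num_toRat {u : ℤ × ℤ} (hu : 0 < u.2) (h : IsCoprime u.1 u.2) : (toRat u).num = u.1 :=
  Rat.num_div_eq_of_coprime hu (Int.isCoprime_iff_gcd_eq_one.1 h)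

lemma den_toRat {u : ℤ × ℤ} (hu : 0 < u.2) (h : IsCoprime u.1 u.2) :
    ((toRat u).den : ℤ) = u.2 :=
  Rat.den_div_eq_of_coprime hu (Int.isCoprime_iff_gcd_eq_one.1 h)

lemma mediant_toRat {u v : ℤ × ℤ} (hu : 0 < u.2) (hv : 0 < v.2) (hu' : IsCoprime u.1 u.2)
    (hv' : IsCoprime v.1 v.2) : mediant (toRat u) (toRat v) = toRat (u + v) := by
  have hden : (((toRat u).den + (toRat v).den : ℕ) : ℚ) = ((u.2 + v.2 : ℤ) : ℚ) := by
    rw [← den_toRat hu hu', ← den_toRat hv hv']; push_cast; rfl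
  rw [mediant, num_toRat hu hu', num_toRat hv hv', hden]
  rfl

lemma le_den_of_mem_Ioo {u v : ℤ × ℤ} (hu : 0 < u.2) (hv : 0 < v.2) (h : det v u = 1) {q : ℚ}
    (hq : q ∈ Ioo (toRat u) (toRat v)) : u.2 + v.2 ≤ q.den := by
  have hd : (0 : ℚ) < q.den := by exact_mod_cast q.pos
  obtain ⟨h1, h2⟩ := hq
  rw [← Rat.num_div_den q, toRat, div_lt_div_iff₀ (by exact_mod_cast hu) hd] at h1
  rw [← Rat.num_div_den q, toRat, div_lt_div_iff₀ hd (by exact_mod_cast hv)] at h2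
  have h1' : u.1 * q.den + 1 ≤ q.num * u.2 := by exact_mod_cast h1
  have h2' : q.num * v.2 + 1 ≤ v.1 * q.den := by exact_mod_cast h2
  unfold det at h
  -- `q.den = v.2 * (q.num * u.2 - u.1 * q.den) + u.2 * (v.1 * q.den - q.num * v.2)`
  nlinarith

lemma rrcfVal_nil : rrcfVal [] = 1 := by
  simp [rrcfVal, rrTail]

lemma rrcfVal_cons (c : ℕ) (t : List ℕ) :
    rrcfVal (c :: t) = 1 - 1 / ((c : ℚ) - 1 + rrcfVal t) := by
  simp only [rrcfVal, rrTail]; ring_nf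

lemma rrcfVal_mem_Ioc {b : List ℕ} (hb : Digits b) : rrcfVal b ∈ Ioc 0 1 := by
  induction b with
  | nil => simp [rrcfVal_nil]
  | cons c t ih =>
    obtain ⟨hc, ht⟩ := hb.of_cons
    obtain ⟨h0, h1⟩ := ih ht
    have hc' : (2 : ℚ) ≤ c := by exact_mod_cast hc
    rw [rrcfVal_cons]
    have : 1 / ((c : ℚ) - 1 + rrcfVal t) < 1 := by rw [div_lt_one] <;> linarith
    have : 0 < 1 / ((c : ℚ) - 1 + rrcfVal t) := one_div_pos.2 (by linarith)
    constructor <;> linarith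

lemma rrcfVal_lt_one {b : List ℕ} (hb : Digits b) (hb0 : b ≠ []) : rrcfVal b < 1 := by
  obtain ⟨c, t, rfl⟩ := List.exists_cons_of_ne_nil hb0
  obtain ⟨hc, ht⟩ := hb.of_cons
  obtain ⟨h0, -⟩ := rrcfVal_mem_Ioc ht
  have hc' : (2 : ℚ) ≤ c := by exact_mod_cast hc
  rw [rrcfVal_cons, sub_lt_self_iff]
  exact one_div_pos.2 (by linarith)

lemma rrcfVal_injective {b c : List ℕ} (hb : Digits b) (hc : Digits c)
    (h : rrcfVal b = rrcfVal c) : b = c := by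
  induction b generalizing c with
  | nil =>
    by_contra hne
    exact (rrcfVal_lt_one hc (Ne.symm hne)).ne (by rw [← h, rrcfVal_nil])
  | cons b₁ t ih =>
    cases c with
    | nil =>
      exact absurd (by rw [h, rrcfVal_nil]) (rrcfVal_lt_one hb (List.cons_ne_nil _ _)).ne
    | cons c₁ s =>
      obtain ⟨hb₁, ht⟩ := hb.of_cons
      obtain ⟨hc₁, hs⟩ := hc.of_cons
      obtain ⟨ht0, ht1⟩ := rrcfVal_mem_Ioc ht
      obtain ⟨hs0, hs1⟩ := rrcfVal_mem_Ioc hs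
      have hb₁' : (2 : ℚ) ≤ b₁ := by exact_mod_cast hb₁
      have hc₁' : (2 : ℚ) ≤ c₁ := by exact_mod_cast hc₁
      rw [rrcfVal_cons, rrcfVal_cons, sub_right_inj, one_div, one_div, inv_inj] at h
      -- `b₁ - c₁ = rrcfVal s - rrcfVal t` is an integer in `(-1, 1)`
      have hbc : b₁ = c₁ := by
        have hlt : b₁ < c₁ + 1 := by exact_mod_cast (by linarith : (b₁ : ℚ) < c₁ + 1)
        have hgt : c₁ < b₁ + 1 := by exact_mod_cast (by linarith : (c₁ : ℚ) < b₁ + 1)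
        omega
      subst hbc
      rw [ih ht hs (by linarith)]

lemma numDen_pos {b : List ℕ} (hb : Digits b) : 0 ≤ (numDen b).1 ∧ 0 < (numDen b).2 :=
  foldr_act_nonneg hb zero_le_one one_pos

lemma leftNumDen_pos {b : List ℕ} (hb : Digits b) :
    0 ≤ (leftNumDen b).1 ∧ 0 < (leftNumDen b).2 :=
  foldr_act_nonneg hb le_rfl one_pos

lemma rrcfVal_eq_toRat {b : List ℕ} (hb : Digits b) : rrcfVal b = toRat (numDen b) := by
  induction b with
  | nil => simp [rrcfVal_nil, numDen, toRat]
  | cons c t ih =>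
    obtain ⟨hc, ht⟩ := hb.of_cons
    obtain ⟨h1, h2⟩ := numDen_pos ht
    rw [rrcfVal_cons, ih ht, ← toRat_act hc h1 h2]
    rfl

lemma det_numDen_leftNumDen (b : List ℕ) : det (numDen b) (leftNumDen b) = 1 :=
  det_foldr_act b _ _

lemma numDen_concat (i : List ℕ) (g : ℕ) :
    numDen (i ++ [g]) = leftNumDen (i ++ [g]) + numDen i := by
  simp only [numDen, leftNumDen, List.foldr_append, List.foldr_cons, List.foldr_nil,
    ← foldr_act_add]
  congr 1
  simp only [act, Prod.mk_add_mk, Prod.mk.injEq]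
  constructor <;> ring

lemma det_numDen_leftNumDen_concat (i : List ℕ) (g : ℕ) :
    det (numDen i) (leftNumDen (i ++ [g])) = 1 := by
  have h := det_numDen_leftNumDen (i ++ [g])
  rwa [numDen_concat, det_add_left, det_self, zero_add] at h

lemma leftNumDen_concat_two (b : List ℕ) : leftNumDen (b ++ [2]) = leftNumDen b := by
  simp [leftNumDen, List.foldr_append, act]

lemma leftNumDen_concat_succ (i : List ℕ) (g : ℕ) :
    leftNumDen (i ++ [g + 1]) = numDen (i ++ [g]) := by
  simp only [numDen, leftNumDen, List.foldr_append, List.foldr_cons, List.foldr_nil]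
  congr 1
  simp only [act, Prod.mk.injEq]
  push_cast
  constructor <;> ring

lemma toRat_add_mem_Ioo {u v : ℤ × ℤ} (hu : 0 < u.2) (hv : 0 < v.2) (h : 0 < det v u) :
    toRat (u + v) ∈ Ioo (toRat u) (toRat v) := by
  have huv : 0 < (u + v).2 := add_pos hu hv
  refine ⟨toRat_lt_toRat hu huv ?_, toRat_lt_toRat huv hv ?_⟩
  · rwa [det_add_left, det_self, zero_add]
  · rwa [det_add_right, det_self, add_zero]

lemma mediant_mem_Ioo {x y : ℚ} (h : x < y) : mediant x y ∈ Ioo x y := by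
  have htoRat (z : ℚ) : toRat (z.num, (z.den : ℤ)) = z := by
    rw [toRat, Int.cast_natCast, Rat.num_div_den]
  have hmed : mediant x y = toRat ((x.num, (x.den : ℤ)) + (y.num, (y.den : ℤ))) := by
    rw [mediant, toRat, Prod.fst_add, Prod.snd_add]; push_cast; rfl
  have hdet : 0 < det (y.num, (y.den : ℤ)) (x.num, (x.den : ℤ)) := by
    rw [det, sub_pos]
    exact (Rat.lt_iff x y).1 h
  have := toRat_add_mem_Ioo (Int.natCast_pos.2 x.pos) (Int.natCast_pos.2 y.pos) hdet
  rwa [htoRat, htoRat, ← hmed] at this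

lemma rightParent_concat (i : List ℕ) (g : ℕ) : rightParent (i ++ [g]) = rrcfVal i := by
  rw [rightParent, List.dropLast_concat]

lemma leftParent_concat_two (b : List ℕ) : leftParent (b ++ [2]) = leftParent b := by
  rw [leftParent, leftNumDen_concat_two, leftParent]

lemma leftParent_concat_succ {i : List ℕ} {g : ℕ} (h : Digits (i ++ [g])) :
    leftParent (i ++ [g + 1]) = rrcfVal (i ++ [g]) := by
  rw [leftParent, leftNumDen_concat_succ, rrcfVal_eq_toRat h]

lemma rrcfVal_mem_Ioo_parents {i : List ℕ} {g : ℕ} (h : Digits (i ++ [g])) :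
    rrcfVal (i ++ [g]) ∈ Ioo (leftParent (i ++ [g])) (rightParent (i ++ [g])) := by
  rw [rightParent_concat, rrcfVal_eq_toRat h, rrcfVal_eq_toRat h.of_concat.1, numDen_concat]
  refine toRat_add_mem_Ioo (leftNumDen_pos h).2 (numDen_pos h.of_concat.1).2 ?_
  rw [det_numDen_leftNumDen_concat]
  exact one_pos

lemma mediant_leftParent_rightParent {i : List ℕ} {g : ℕ} (h : Digits (i ++ [g])) :
    mediant (leftParent (i ++ [g])) (rightParent (i ++ [g])) = rrcfVal (i ++ [g]) := by
  rw [rightParent_concat, rrcfVal_eq_toRat h, rrcfVal_eq_toRat h.of_concat.1, numDen_concat]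
  obtain ⟨hi, hl⟩ := isCoprime_of_det_eq_one (det_numDen_leftNumDen_concat i g)
  exact mediant_toRat (leftNumDen_pos h).2 (numDen_pos h.of_concat.1).2 hl hi

lemma numDen_snd_le_den {i : List ℕ} {g : ℕ} (h : Digits (i ++ [g])) {q : ℚ}
    (hq : q ∈ Ioo (leftParent (i ++ [g])) (rightParent (i ++ [g]))) :
    (numDen (i ++ [g])).2 ≤ q.den := by
  rw [rightParent_concat, rrcfVal_eq_toRat h.of_concat.1] at hq
  rw [numDen_concat]
  exact le_den_of_mem_Ioo (leftNumDen_pos h).2 (numDen_pos h.of_concat.1).2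
    (det_numDen_leftNumDen_concat i g) hq

lemma exists_child {i : List ℕ} {g : ℕ} (h : Digits (i ++ [g])) {q : ℚ}
    (hq : q ∈ Ioo (leftParent (i ++ [g])) (rightParent (i ++ [g])))
    (hne : q ≠ rrcfVal (i ++ [g])) :
    ∃ j d, Digits (j ++ [d]) ∧ (i ++ [g]).sum < (j ++ [d]).sum ∧
      (numDen (i ++ [g])).2 < (numDen (j ++ [d])).2 ∧
      q ∈ Ioo (leftParent (j ++ [d])) (rightParent (j ++ [d])) := by
  obtain ⟨hi, hg⟩ := h.of_concat
  rcases hne.lt_or_gt with hlt | hgt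
  · refine ⟨i ++ [g], 2, h.concat le_rfl, by simp, ?_, ?_⟩
    · rw [numDen_concat (i ++ [g]), leftNumDen_concat_two, Prod.snd_add]
      linarith [(leftNumDen_pos h).2]
    · rw [leftParent_concat_two, rightParent_concat]
      exact ⟨hq.1, hlt⟩
  · refine ⟨i, g + 1, hi.concat (by omega), by simp, ?_, ?_⟩
    · rw [numDen_concat i (g + 1), leftNumDen_concat_succ, Prod.snd_add]
      linarith [(numDen_pos hi).2]
    · rw [leftParent_concat_succ h, rightParent_concat, ← rightParent_concat i g]
      exact ⟨hgt, hq.2⟩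

theorem sum_le_sum_of_mem_Ioo {i : List ℕ} {g : ℕ} {c : List ℕ} (h : Digits (i ++ [g]))
    (hc : Digits c) (hq : rrcfVal c ∈ Ioo (leftParent (i ++ [g])) (rightParent (i ++ [g]))) :
    (i ++ [g]).sum ≤ c.sum := by
  by_cases heq : rrcfVal c = rrcfVal (i ++ [g])
  · rw [rrcfVal_injective hc h heq]
  obtain ⟨j, d, h', hsum, hden, hq'⟩ := exists_child h hq heq
  have := numDen_snd_le_den h' hq'
  exact hsum.le.trans (sum_le_sum_of_mem_Ioo h' hc hq')
-- by the Farey bound, the denominator of `rrcfVal c` bounds `(numDen b).2` along the descent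
termination_by ((rrcfVal c).den - (numDen (i ++ [g])).2).toNat
decreasing_by omega

lemma mem_Xi {m : ℕ} {w : ℚ} :
    w ∈ Xi m ↔ w = 0 ∨ ∃ c, Digits c ∧ c.sum ≤ m + 1 ∧ rrcfVal c = w := by
  simp only [Xi, Theta, mem_union, mem_insert_iff, mem_singleton_iff, mem_iUnion,
    Finset.mem_Icc, IsRRCF, mem_ofPred_eq, exists_prop]
  constructor
  · rintro ((rfl | rfl) | ⟨k, hk, -, c, ⟨hc, rfl⟩, hsum⟩)
    · exact Or.inl rfl
    · exact Or.inr ⟨[], fun _ h => absurd h List.not_mem_nil, by simp, rrcfVal_nil⟩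
    · exact Or.inr ⟨c, hc, by omega, rfl⟩
  · rintro (rfl | ⟨c, hc, hsum, rfl⟩)
    · exact Or.inl (Or.inl rfl)
    rcases eq_or_ne c [] with rfl | hc0
    · exact Or.inl (Or.inr rrcfVal_nil)
    obtain ⟨d, t, rfl⟩ := List.exists_cons_of_ne_nil hc0
    have hd := hc.of_cons.1
    refine Or.inr ⟨(d :: t).sum - 1, ⟨by simp; omega, by omega⟩,
      ⟨(rrcfVal_mem_Ioc hc).1, rrcfVal_lt_one hc hc0⟩, d :: t, ⟨hc, rfl⟩, by simp; omega⟩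

lemma rrcfVal_mem_Xi {c : List ℕ} (hc : Digits c) {m : ℕ} (h : c.sum ≤ m + 1) :
    rrcfVal c ∈ Xi m :=
  mem_Xi.2 (Or.inr ⟨c, hc, h, rfl⟩)

lemma Xi_mono {n m : ℕ} (h : n ≤ m) : Xi n ⊆ Xi m := by
  intro w hw
  rcases mem_Xi.1 hw with rfl | ⟨c, hc, hsum, rfl⟩
  · exact mem_Xi.2 (Or.inl rfl)
  · exact rrcfVal_mem_Xi hc (by omega)

lemma Xi_subset_Icc (m : ℕ) : Xi m ⊆ Icc 0 1 := by
  intro w hw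
  rcases mem_Xi.1 hw with rfl | ⟨c, hc, -, rfl⟩
  · simp
  · exact Ioc_subset_Icc_self (rrcfVal_mem_Ioc hc)

lemma Theta_finite (k : ℕ) : (Theta k).Finite := by
  refine (Set.finite_range fun c : Composition (k + 1) => rrcfVal c.blocks).subset ?_
  rintro w ⟨-, c, ⟨hc, rfl⟩, hsum⟩
  exact ⟨⟨c, fun hi => by have := hc _ hi; omega, hsum⟩, rfl⟩

lemma Xi_finite (m : ℕ) : (Xi m).Finite :=
  (toFinite _).union ((Finset.finite_toSet _).biUnion fun k _ => Theta_finite k)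

lemma leftParent_mem_Xi {b : List ℕ} (hb : Digits b) : leftParent b ∈ Xi (b.sum - 2) := by
  induction b using List.reverseRecOn with
  | nil => exact mem_Xi.2 (Or.inl (by simp [leftParent, leftNumDen, toRat]))
  | append_singleton i g ih =>
    obtain ⟨hi, hg⟩ := hb.of_concat
    obtain ⟨g, rfl⟩ : ∃ g', g = g' + 1 := ⟨g - 1, by omega⟩
    rcases eq_or_lt_of_le hg with hg2 | hg3
    · obtain rfl : g = 1 := by omega
      rw [leftParent_concat_two]
      exact Xi_mono (by simp only [sum_append_singleton]; omega) (ih hi)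
    · rw [leftParent_concat_succ (hi.concat (by omega))]
      exact rrcfVal_mem_Xi (hi.concat (by omega)) (by simp only [sum_append_singleton]; omega)

lemma rightParent_mem_Xi {b : List ℕ} (hb : Digits b) : rightParent b ∈ Xi (b.sum - 2) := by
  rcases List.eq_nil_or_concat' b with rfl | ⟨i, g, rfl⟩
  · exact rrcfVal_mem_Xi hb (by simp)
  · obtain ⟨hi, hg⟩ := hb.of_concat
    rw [rightParent_concat]
    exact rrcfVal_mem_Xi hi (by simp only [sum_append_singleton]; omega)

lemma Xi_inter_Ioo_parents_eq_empty {i : List ℕ} {g : ℕ} (h : Digits (i ++ [g])) {m : ℕ}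
    (hm : m + 2 ≤ (i ++ [g]).sum) :
    Xi m ∩ Ioo (leftParent (i ++ [g])) (rightParent (i ++ [g])) = ∅ := by
  refine eq_empty_of_forall_notMem fun w ⟨hw, hwI⟩ => ?_
  rcases mem_Xi.1 hw with rfl | ⟨c, hc, hsum, rfl⟩
  · exact (Xi_subset_Icc _ (leftParent_mem_Xi h)).1.not_gt hwI.1
  · have := sum_le_sum_of_mem_Ioo h hc hwI
    omega

lemma ncard_inter_Ioo_eq {α : Type*} [LinearOrder α] {S : Set α} (hS : S.Finite) {a b c : α}
    (hab : a < b) (hbc : b < c) (hb : b ∈ S) :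
    (S ∩ Ioo a c).ncard = (S ∩ Ioo a b).ncard + 1 + (S ∩ Ioo b c).ncard := by
  have hdisj : Disjoint (S ∩ Ioc a b) (S ∩ Ioo b c) :=
    disjoint_left.2 fun w hw hw' => hw.2.2.not_gt hw'.2.1
  have hb' : b ∉ S ∩ Ioo a b := fun h => h.2.2.false
  rw [← Ioc_union_Ioo_eq_Ioo hab.le hbc, inter_union_distrib_left,
    ncard_union_eq hdisj (hS.subset inter_subset_left) (hS.subset inter_subset_left),
    ← Ioo_insert_right hab, inter_insert_of_mem hb,
    ncard_insert_of_notMem hb' (hS.subset inter_subset_left)]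

lemma ncard_inter_Ioc_eq {α : Type*} [LinearOrder α] {S : Set α} (hS : S.Finite) {a b : α}
    (hab : a < b) (hb : b ∈ S) : (S ∩ Ioc a b).ncard = (S ∩ Ioo a b).ncard + 1 := by
  rw [← Ioo_insert_right hab, inter_insert_of_mem hb,
    ncard_insert_of_notMem (fun h => h.2.2.false) (hS.subset inter_subset_left)]

theorem ncard_Xi_inter_Ioo_parents {i : List ℕ} {g : ℕ} (h : Digits (i ++ [g])) {m e : ℕ}
    (he : m + 3 = (i ++ [g]).sum + e) :
    (Xi m ∩ Ioo (leftParent (i ++ [g])) (rightParent (i ++ [g]))).ncard + 1 =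
      Nat.fib (e + 1) := by
  induction e using Nat.twoStepInduction generalizing i g with
  | zero => rw [Xi_inter_Ioo_parents_eq_empty h (by omega), ncard_empty]; rfl
  | one => rw [Xi_inter_Ioo_parents_eq_empty h (by omega), ncard_empty]; rfl
  | more e ih₀ ih₁ =>
    obtain ⟨hi, hg⟩ := h.of_concat
    obtain ⟨hl, hr⟩ := rrcfVal_mem_Ioo_parents h
    simp only [sum_append_singleton] at he
    have h₀ := ih₀ (h.concat le_rfl) (by simp only [sum_append_singleton]; omega)
    have h₁ := ih₁ (hi.concat (by omega : 2 ≤ g + 1))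
      (by simp only [sum_append_singleton]; omega)
    rw [leftParent_concat_two, rightParent_concat] at h₀
    rw [leftParent_concat_succ h, rightParent_concat, ← rightParent_concat i g] at h₁
    have hb : rrcfVal (i ++ [g]) ∈ Xi m :=
      rrcfVal_mem_Xi h (by simp only [sum_append_singleton]; omega)
    rw [ncard_inter_Ioo_eq (Xi_finite m) hl hr hb,
      show e + 2 + 1 = (e + 1) + 2 by ring, Nat.fib_add_two]
    omega

theorem exists_eq_parents_of_isConsecutive {n : ℕ} {x y : ℚ} (hxy : IsConsecutive (Xi n) x y)
    {c : List ℕ} (hc : Digits c) (hcxy : rrcfVal c ∈ Ioo x y) :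
    ∃ i g, Digits (i ++ [g]) ∧ leftParent (i ++ [g]) = x ∧ rightParent (i ++ [g]) = y := by
  obtain ⟨hx, hy, hlt, hcons⟩ := hxy
  set S := {c | Digits c ∧ rrcfVal c ∈ Ioo x y}
  obtain ⟨b, ⟨hb, hbxy⟩, hmin⟩ : ∃ b ∈ S, ∀ c ∈ S, b.sum ≤ c.sum :=
    ⟨_, Function.argminOn_mem _ S ⟨c, hc, hcxy⟩, fun c hc => Function.argminOn_le _ _ hc⟩
  have hsum : n + 2 ≤ b.sum := by
    by_contra! hsum
    exact hcons _ (rrcfVal_mem_Xi hb (by omega)) hbxy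
  obtain ⟨i, g, rfl⟩ := (List.eq_nil_or_concat' b).resolve_left (by rintro rfl; simp at hsum)
  have hgap : ∀ w ∈ Xi ((i ++ [g]).sum - 2), w ∉ Ioo x y := by
    intro w hw hwxy
    rcases mem_Xi.1 hw with rfl | ⟨c, hc, hcsum, rfl⟩
    · exact (Xi_subset_Icc n hx).1.not_gt hwxy.1
    · have := hmin c ⟨hc, hwxy⟩
      omega
  obtain ⟨hl, hr⟩ := rrcfVal_mem_Ioo_parents hb
  have hlx : leftParent (i ++ [g]) ≤ x :=
    not_lt.1 fun h => hgap _ (leftParent_mem_Xi hb) ⟨h, hl.trans hbxy.2⟩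
  have hyr : y ≤ rightParent (i ++ [g]) :=
    not_lt.1 fun h => hgap _ (rightParent_mem_Xi hb) ⟨hbxy.1.trans hr, h⟩
  have hempty := Xi_inter_Ioo_parents_eq_empty hb hsum
  refine ⟨i, g, hb, hlx.eq_of_not_lt fun h => ?_, hyr.eq_of_not_lt' fun h => ?_⟩
  · exact hempty.subset ⟨hx, h, hlt.trans_le hyr⟩
  · exact hempty.subset ⟨hy, hlx.trans_lt hlt, h⟩

end RRCF

open RRCF

theorem ncard_between_consecutive_general
    (n : ℕ) (x y : ℚ) (hxy : IsConsecutive (Xi n) x y)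
    (k : ℕ) (hk : mediant x y ∈ Theta k) :
    ∀ m : ℕ, k ≤ m →
      ({ξ ∈ Xi m | x < ξ ∧ ξ ≤ y}).ncard = Nat.fib (m - k + 3) := by
  obtain ⟨-, c, ⟨hc, hcval⟩, hcsum⟩ := hk
  obtain ⟨i, g, hb, rfl, rfl⟩ :=
    exists_eq_parents_of_isConsecutive hxy hc (hcval ▸ mediant_mem_Ioo hxy.2.2.1)
  obtain rfl : c = i ++ [g] :=
    rrcfVal_injective hc hb (hcval.symm.trans (mediant_leftParent_rightParent hb))
  intro m hm
  have hy : rightParent (i ++ [g]) ∈ Xi m := Xi_mono (by omega) (rightParent_mem_Xi hb)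
  obtain ⟨hl, hr⟩ := rrcfVal_mem_Ioo_parents hb
  change (Xi m ∩ Ioc _ _).ncard = _
  rw [ncard_inter_Ioc_eq (Xi_finite m) (hl.trans hr) hy,
    ncard_Xi_inter_Ioo_parents hb (e := m + 2 - k) (by omega)]
  congr 1
  omega

/-- if `x < y` are consecutive in `Ξ_n` and `x ⊕ y ∈ Θ_k`, then
for every `m ≥ k`, `#{ξ ∈ Ξ_m : x < ξ ≤ y} = F_{m-k+3}`. -/
theorem ncard_between_consecutive
    (n : ℕ) (hn : 1 ≤ n) (x y : ℚ) (hxy : IsConsecutive (Xi n) x y)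
    (k : ℕ) (hk : mediant x y ∈ Theta k) :
    ∀ m : ℕ, k ≤ m →
      ({ξ ∈ Xi m | x < ξ ∧ ξ ≤ y}).ncard = Nat.fib (m - k + 3) :=
  ncard_between_consecutive_general n x y hxy k hk
end

section
/- Let M(t) = lim_{m→∞} #{ ξ ∈ Ξ_m : ξ ≤ t } / #Ξ_m for t ∈ [0,1]. Then for any two consecutive elements x < y of Ξ_n (n ≥ 1), the limits M(x), M(y) and M(x ⊕ y) exist and satisfy M(x ⊕ y) = M(x) + (M(y) − M(x)) · τ², where τ² = (3−√5)/2 and x ⊕ y is the mediant of x and y. -/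
open Set Filter

/-!
For `m ≥ 1` the lower half `Ξ_m ∩ [0, 1/2]` is the image of `Ξ_{m-2}` under
`x ↦ x / (x + 1)` (prepend the digit `2` to the expansion), and the upper half `Ξ_m ∩ [1/2, 1]`
is the image of `Ξ_{m-1}` under `x ↦ 1 / (2 - x)` (raise the first digit by one); the two halves
share only `1/2`. Hence `#Ξ_m = F_{m+2} + 1`, so `#Ξ_{m-j} / #Ξ_m → τ^j` with `τ = φ⁻¹`, and
`M(x / (x + 1)) = τ² M(x)`, `M(1 / (2 - x)) = τ² + τ M(x)`.
Both maps are increasing Möbius maps of determinant `1`: they preserve consecutiveness and commute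
with taking mediants. As `M` transforms affinely under them, the relation for consecutive elements
of `Ξ_n` follows by induction on `n` from the pair `0 < 1` of `Ξ_0`, where `M(1/2) = τ²`.
-/

open Real Topology
open scoped goldenRatio

section Moebius

variable {a b c d : ℤ}

def moebius (a b c d : ℤ) (x : ℚ) : ℚ := (a * x + b) / (c * x + d)

theorem moebius_strictMonoOn (hdet : a * d - b * c = 1) :
    StrictMonoOn (moebius a b c d) {x | 0 < c * x + d} := by
  intro x hx y hy hxy
  have hdet' : (a * d - b * c : ℚ) = 1 := by exact_mod_cast hdet
  have key : (a * y + b) * (c * x + d) - (a * x + b) * (c * y + d) = y - x := by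
    linear_combination (y - x) * hdet'
  rw [moebius, moebius, div_lt_div_iff₀ hx hy]
  linarith

theorem moebius_num_den (hdet : a * d - b * c = 1) {x : ℚ} (hx : 0 < c * x + d) :
    (moebius a b c d x).num = a * x.num + b * x.den ∧
      ((moebius a b c d x).den : ℤ) = c * x.num + d * x.den := by
  have hden : (0 : ℚ) < x.den := by exact_mod_cast x.den_pos
  have hpos : 0 < c * x.num + d * x.den := by
    have : (0 : ℚ) < c * x.num + d * x.den := by
      rw [← Rat.mul_den_eq_num]; nlinarith
    exact_mod_cast this
  -- the matrix `(a b; c d)` is invertible over `ℤ`, so it maps the coprime pair `(num, den)`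
  -- to a coprime pair
  have hcop : IsCoprime (a * x.num + b * x.den) (c * x.num + d * x.den) := by
    obtain ⟨u, v, huv⟩ := Rat.isCoprime_num_den x
    exact ⟨u * d - v * c, v * a - u * b,
      by linear_combination huv + (u * x.num + v * x.den) * hdet⟩
  have hval : moebius a b c d x =
      ((a * x.num + b * x.den : ℤ) : ℚ) / ((c * x.num + d * x.den : ℤ) : ℚ) := by
    rw [moebius, div_eq_div_iff hx.ne' (by exact_mod_cast hpos.ne')]
    push_cast
    rw [← Rat.mul_den_eq_num]
    ring
  rw [Int.isCoprime_iff_gcd_eq_one] at hcop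
  rw [hval]
  exact ⟨Rat.num_div_eq_of_coprime hpos hcop, Rat.den_div_eq_of_coprime hpos hcop⟩

theorem mediant_moebius (hdet : a * d - b * c = 1) {x y : ℚ} (hx : 0 < c * x + d)
    (hy : 0 < c * y + d) :
    mediant (moebius a b c d x) (moebius a b c d y) = moebius a b c d (mediant x y) := by
  obtain ⟨hnx, hdx⟩ := moebius_num_den hdet hx
  obtain ⟨hny, hdy⟩ := moebius_num_den hdet hy
  have hdx' : ((moebius a b c d x).den : ℚ) = c * x.num + d * x.den := by exact_mod_cast hdx
  have hdy' : ((moebius a b c d y).den : ℚ) = c * y.num + d * y.den := by exact_mod_cast hdy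
  unfold mediant
  push_cast
  rw [hnx, hny, hdx', hdy']
  unfold moebius
  push_cast
  field_simp
  ring

end Moebius

theorem mediant_mem_Icc {x y : ℚ} (hxy : x ≤ y) : mediant x y ∈ Icc x y := by
  have hxd : (0 : ℚ) < x.den := by exact_mod_cast x.den_pos
  have hyd : (0 : ℚ) < y.den := by exact_mod_cast y.den_pos
  have hval : mediant x y = (x * x.den + y * y.den) / (x.den + y.den) := by
    simp only [mediant, Rat.mul_den_eq_num]
    push_cast
    rfl
  rw [hval]
  constructor
  · rw [le_div_iff₀ (by positivity)]; nlinarith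
  · rw [div_le_iff₀ (by positivity)]; nlinarith

section Order

variable {α β : Type*} [LinearOrder α] [LinearOrder β]

theorem StrictMonoOn.image_inter_Iic {f : α → β} {s A : Set α} (hf : StrictMonoOn f s)
    (hA : A ⊆ s) {t : α} (ht : t ∈ s) : f '' A ∩ Iic (f t) = f '' (A ∩ Iic t) := by
  ext y
  constructor
  · rintro ⟨⟨x, hx, rfl⟩, hle⟩
    exact ⟨x, ⟨hx, (hf.le_iff_le (hA hx) ht).1 hle⟩, rfl⟩
  · rintro ⟨x, ⟨hx, hle⟩, rfl⟩
    exact ⟨⟨x, hx, rfl⟩, (hf.le_iff_le (hA hx) ht).2 hle⟩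

theorem union_inter_Iic_eq_left {A B : Set α} {p : α} (hA : A ⊆ Iic p) (hB : B ⊆ Ici p)
    (hp : p ∈ A) : (A ∪ B) ∩ Iic p = A := by
  ext x
  refine ⟨?_, fun hx => ⟨Or.inl hx, hA hx⟩⟩
  rintro ⟨hx | hx, hle⟩
  · exact hx
  · rwa [le_antisymm hle (hB hx)]

theorem union_inter_Ici_eq_right {A B : Set α} {p : α} (hA : A ⊆ Iic p) (hB : B ⊆ Ici p)
    (hp : p ∈ B) : (A ∪ B) ∩ Ici p = B := by
  ext x
  refine ⟨?_, fun hx => ⟨Or.inr hx, hB hx⟩⟩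
  rintro ⟨hx | hx, hge⟩
  · rwa [le_antisymm (hA hx) hge]
  · exact hx

theorem ncard_inter_Iic_add_ncard_inter_Ici {S : Set α} (hS : S.Finite) {p : α} (hp : p ∈ S) :
    (S ∩ Iic p).ncard + (S ∩ Ici p).ncard = S.ncard + 1 := by
  have hunion : S ∩ Iic p ∪ S ∩ Ici p = S := by
    rw [← inter_union_distrib_left, Iic_union_Ici, inter_univ]
  have hinter : S ∩ Iic p ∩ (S ∩ Ici p) = {p} := by
    rw [inter_inter_inter_comm, inter_self, Iic_inter_Ici, Icc_self,
      inter_eq_right.2 (singleton_subset_iff.2 hp)]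
  rw [← ncard_union_add_ncard_inter _ _ (hS.inter_of_left _) (hS.inter_of_left _), hunion, hinter,
    ncard_singleton]

theorem IsConsecutive.exists_preimage {S T I s : Set ℚ} {f : ℚ → ℚ} {x y : ℚ}
    (hxy : IsConsecutive S x y) (hf : StrictMonoOn f s) (hT : T ⊆ s) (hST : S ∩ I = f '' T)
    (hx : x ∈ I) (hy : y ∈ I) : ∃ x' y', x = f x' ∧ y = f y' ∧ IsConsecutive T x' y' := by
  obtain ⟨hxS, hyS, hlt, hgap⟩ := hxy
  obtain ⟨x', hx', rfl⟩ : x ∈ f '' T := hST ▸ ⟨hxS, hx⟩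
  obtain ⟨y', hy', rfl⟩ : y ∈ f '' T := hST ▸ ⟨hyS, hy⟩
  refine ⟨x', y', rfl, rfl, hx', hy', (hf.lt_iff_lt (hT hx') (hT hy')).1 hlt, ?_⟩
  rintro z hz ⟨hxz, hzy⟩
  have hfz : f z ∈ S ∩ I := hST ▸ mem_image_of_mem f hz
  exact hgap (f z) hfz.1
    ⟨(hf.lt_iff_lt (hT hx') (hT hz)).2 hxz, (hf.lt_iff_lt (hT hz) (hT hy')).2 hzy⟩

end Order

abbrev lowerMap : ℚ → ℚ := moebius 1 0 1 1

abbrev upperMap : ℚ → ℚ := moebius 0 1 (-1) 2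

theorem strictMonoOn_lowerMap : StrictMonoOn lowerMap (Icc 0 1) :=
  (moebius_strictMonoOn (by norm_num)).mono fun x hx => by
    simp only [mem_ofPred_eq]; push_cast; linarith [hx.1]

theorem strictMonoOn_upperMap : StrictMonoOn upperMap (Icc 0 1) :=
  (moebius_strictMonoOn (by norm_num)).mono fun x hx => by
    simp only [mem_ofPred_eq]; push_cast; linarith [hx.2]

theorem mapsTo_lowerMap : MapsTo lowerMap (Icc 0 1) (Icc 0 (1 / 2)) := by
  convert strictMonoOn_lowerMap.monotoneOn.mapsTo_Icc using 2 <;> norm_num [moebius]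

theorem mapsTo_upperMap : MapsTo upperMap (Icc 0 1) (Icc (1 / 2) 1) := by
  convert strictMonoOn_upperMap.monotoneOn.mapsTo_Icc using 2 <;> norm_num [moebius]

theorem one_lt_rrTail_cons {a : ℕ} {t : List ℕ} (h : ∀ bi ∈ a :: t, 2 ≤ bi) :
    1 < rrTail (a :: t) := by
  induction t generalizing a with
  | nil =>
    have : (2 : ℚ) ≤ a := by exact_mod_cast h a List.mem_cons_self
    simp only [rrTail, div_zero, sub_zero]
    linarith
  | cons a' t ih =>
    obtain ⟨ha, ht⟩ := List.forall_mem_cons.1 h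
    have ha' : (2 : ℚ) ≤ a := by exact_mod_cast ha
    have hr := ih ht
    have : 1 / rrTail (a' :: t) < 1 := by rw [div_lt_one (by linarith)]; exact hr
    simp only [rrTail] at hr this ⊢
    linarith

theorem rrcfVal_cons_mem_Ioo_s12 {a : ℕ} {t : List ℕ} (h : ∀ bi ∈ a :: t, 2 ≤ bi) :
    rrcfVal (a :: t) ∈ Ioo 0 1 := by
  have hr := one_lt_rrTail_cons h
  have : 1 / rrTail (a :: t) < 1 := by rw [div_lt_one (by linarith)]; exact hr
  have : 0 < 1 / rrTail (a :: t) := by positivity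
  constructor <;> simp only [rrcfVal] <;> linarith

theorem rrcfVal_nil : rrcfVal [] = 1 := by simp [rrcfVal, rrTail]

theorem rrcfVal_mem_Icc {b : List ℕ} (hb : ∀ bi ∈ b, 2 ≤ bi) : rrcfVal b ∈ Icc 0 1 := by
  cases b with
  | nil => simp [rrcfVal_nil]
  | cons a t => exact Ioo_subset_Icc_self (rrcfVal_cons_mem_Ioo_s12 hb)

theorem rrcfVal_two_cons {t : List ℕ} (ht : ∀ bi ∈ t, 2 ≤ bi) :
    rrcfVal (2 :: t) = lowerMap (rrcfVal t) := by
  cases t with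
  | nil => norm_num [rrcfVal, rrTail, moebius]
  | cons a t =>
    have hr := one_lt_rrTail_cons ht
    have htwo : rrTail (2 :: a :: t) = 2 - 1 / rrTail (a :: t) := by
      simp only [rrTail]; push_cast; ring
    simp only [rrcfVal, moebius, htwo]
    set r := rrTail (a :: t)
    have h : 2 - 1 / r ≠ 0 := by
      have : 1 / r < 1 := by rw [div_lt_one (by linarith)]; exact hr
      linarith
    rw [show ((1 : ℤ) : ℚ) * (1 - 1 / r) + ((1 : ℤ) : ℚ) = 2 - 1 / r by push_cast; ring,
      eq_div_iff h, sub_mul, one_div_mul_cancel h]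
    push_cast
    ring

theorem rrcfVal_succ_cons {a : ℕ} {t : List ℕ} (h : ∀ bi ∈ a :: t, 2 ≤ bi) :
    rrcfVal ((a + 1) :: t) = upperMap (rrcfVal (a :: t)) := by
  have hr := one_lt_rrTail_cons h
  have hsucc : rrTail ((a + 1) :: t) = rrTail (a :: t) + 1 := by
    simp only [rrTail]; push_cast; ring
  simp only [rrcfVal, moebius, hsucc]
  set r := rrTail (a :: t)
  have : r ≠ 0 := by linarith
  have : r + 1 ≠ 0 := by linarith
  rw [show ((-1 : ℤ) : ℚ) * (1 - 1 / r) + ((2 : ℤ) : ℚ) = (r + 1) / r by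
    push_cast; field_simp; ring]
  field_simp
  ring

theorem sum_ne_one_of_two_le {b : List ℕ} (hb : ∀ bi ∈ b, 2 ≤ bi) : b.sum ≠ 1 := by
  cases b with
  | nil => simp
  | cons a t => have := hb a List.mem_cons_self; simp only [List.sum_cons]; omega

theorem mem_Xi_iff_s12 {m : ℕ} {x : ℚ} :
    x ∈ Xi m ↔ x = 0 ∨ ∃ b, IsRRCF x b ∧ b.sum ≤ m + 1 := by
  simp only [Xi, Theta, mem_union, mem_insert_iff, mem_singleton_iff, mem_iUnion,
    Finset.mem_Icc, exists_prop, mem_ofPred_eq]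
  constructor
  · rintro ((rfl | rfl) | ⟨k, ⟨-, hkm⟩, -, b, hb, hsum⟩)
    · exact Or.inl rfl
    · exact Or.inr ⟨[], ⟨by simp, rrcfVal_nil.symm⟩, by simp⟩
    · exact Or.inr ⟨b, hb, by omega⟩
  · rintro (rfl | ⟨_ | ⟨a, t⟩, ⟨hb, rfl⟩, hsum⟩)
    · exact Or.inl (Or.inl rfl)
    · exact Or.inl (Or.inr rrcfVal_nil)
    · have ha := hb a List.mem_cons_self
      simp only [List.sum_cons] at hsum
      exact Or.inr ⟨a + t.sum - 1, ⟨by omega, by omega⟩, rrcfVal_cons_mem_Ioo_s12 hb, a :: t,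
        ⟨hb, rfl⟩, by simp only [List.sum_cons]; omega⟩

theorem Xi_zero : Xi 0 = {0, 1} := by simp [Xi]

theorem zero_mem_Xi (m : ℕ) : (0 : ℚ) ∈ Xi m := Or.inl (Or.inl rfl)

theorem one_mem_Xi (m : ℕ) : (1 : ℚ) ∈ Xi m := Or.inl (Or.inr rfl)

theorem half_mem_Xi {m : ℕ} (hm : 1 ≤ m) : (1 / 2 : ℚ) ∈ Xi m :=
  mem_Xi_iff_s12.2 (Or.inr ⟨[2], ⟨by simp, by norm_num [rrcfVal, rrTail]⟩, by simpa⟩)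

theorem Xi_subset_Icc {m : ℕ} : Xi m ⊆ Icc 0 1 := by
  intro x hx
  rcases mem_Xi_iff_s12.1 hx with rfl | ⟨b, ⟨hb, rfl⟩, -⟩
  · simp
  · exact rrcfVal_mem_Icc hb

theorem Xi_subset_image_union (m : ℕ) :
    Xi m ⊆ lowerMap '' Xi (m - 2) ∪ upperMap '' Xi (m - 1) := by
  intro x hx
  rcases mem_Xi_iff_s12.1 hx with rfl | ⟨_ | ⟨a, t⟩, ⟨hb, rfl⟩, hsum⟩
  · exact Or.inl ⟨0, zero_mem_Xi _, by norm_num [moebius]⟩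
  · exact Or.inr ⟨1, one_mem_Xi _, by norm_num [moebius, rrcfVal_nil]⟩
  · obtain ⟨ha, ht⟩ := List.forall_mem_cons.1 hb
    simp only [List.sum_cons] at hsum
    obtain rfl | ⟨a, rfl, ha'⟩ : a = 2 ∨ ∃ a', a = a' + 1 ∧ 2 ≤ a' := by
      rcases ha.eq_or_lt with h | h
      exacts [Or.inl h.symm, Or.inr ⟨a - 1, by omega, by omega⟩]
    · exact Or.inl ⟨rrcfVal t, mem_Xi_iff_s12.2 (Or.inr ⟨t, ⟨ht, rfl⟩, by omega⟩),
        (rrcfVal_two_cons ht).symm⟩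
    · have hb' : ∀ bi ∈ a :: t, 2 ≤ bi := List.forall_mem_cons.2 ⟨ha', ht⟩
      exact Or.inr ⟨rrcfVal (a :: t),
        mem_Xi_iff_s12.2 (Or.inr ⟨a :: t, ⟨hb', rfl⟩, by simp only [List.sum_cons]; omega⟩),
        (rrcfVal_succ_cons hb').symm⟩

theorem image_lowerMap_Xi_subset {m : ℕ} (hm : 1 ≤ m) : lowerMap '' Xi (m - 2) ⊆ Xi m := by
  rintro _ ⟨x, hx, rfl⟩
  rcases mem_Xi_iff_s12.1 hx with rfl | ⟨b, ⟨hb, rfl⟩, hsum⟩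
  · simpa [moebius] using zero_mem_Xi m
  · have := sum_ne_one_of_two_le hb
    refine mem_Xi_iff_s12.2 (Or.inr ⟨2 :: b, ⟨List.forall_mem_cons.2 ⟨le_rfl, hb⟩,
      (rrcfVal_two_cons hb).symm⟩, ?_⟩)
    simp only [List.sum_cons]
    omega

theorem image_upperMap_Xi_subset {m : ℕ} (hm : 1 ≤ m) : upperMap '' Xi (m - 1) ⊆ Xi m := by
  rintro _ ⟨x, hx, rfl⟩
  rcases mem_Xi_iff_s12.1 hx with rfl | ⟨_ | ⟨a, t⟩, ⟨hb, rfl⟩, hsum⟩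
  · simpa [moebius] using half_mem_Xi hm
  · convert one_mem_Xi m using 1
    norm_num [moebius, rrcfVal_nil]
  · refine mem_Xi_iff_s12.2 (Or.inr ⟨(a + 1) :: t, ⟨?_, (rrcfVal_succ_cons hb).symm⟩, ?_⟩)
    · obtain ⟨ha, ht⟩ := List.forall_mem_cons.1 hb
      exact List.forall_mem_cons.2 ⟨by omega, ht⟩
    · simp only [List.sum_cons] at hsum ⊢
      omega

theorem Xi_eq_image_union {m : ℕ} (hm : 1 ≤ m) :
    Xi m = lowerMap '' Xi (m - 2) ∪ upperMap '' Xi (m - 1) :=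
  (Xi_subset_image_union m).antisymm
    (union_subset (image_lowerMap_Xi_subset hm) (image_upperMap_Xi_subset hm))

theorem Xi_finite : ∀ m, (Xi m).Finite
  | 0 => Xi_zero ▸ toFinite _
  | m + 1 => by
    rw [Xi_eq_image_union (by omega)]
    exact ((Xi_finite _).image _).union ((Xi_finite _).image _)

theorem image_lowerMap_Xi_subset_Iic (k : ℕ) : lowerMap '' Xi k ⊆ Iic (1 / 2) :=
  (mapsTo_lowerMap.mono_left Xi_subset_Icc).image_subset.trans fun _ h => h.2

theorem image_upperMap_Xi_subset_Ici (k : ℕ) : upperMap '' Xi k ⊆ Ici (1 / 2) :=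
  (mapsTo_upperMap.mono_left Xi_subset_Icc).image_subset.trans fun _ h => h.1

theorem Xi_inter_Iic_half {m : ℕ} (hm : 1 ≤ m) :
    Xi m ∩ Iic (1 / 2) = lowerMap '' Xi (m - 2) := by
  rw [Xi_eq_image_union hm]
  exact union_inter_Iic_eq_left (image_lowerMap_Xi_subset_Iic _) (image_upperMap_Xi_subset_Ici _)
    ⟨1, one_mem_Xi _, by norm_num [moebius]⟩

theorem Xi_inter_Ici_half {m : ℕ} (hm : 1 ≤ m) :
    Xi m ∩ Ici (1 / 2) = upperMap '' Xi (m - 1) := by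
  rw [Xi_eq_image_union hm]
  exact union_inter_Ici_eq_right (image_lowerMap_Xi_subset_Iic _) (image_upperMap_Xi_subset_Ici _)
    ⟨0, zero_mem_Xi _, by norm_num [moebius]⟩

theorem ncard_Xi_inter_Iic_lowerMap {m : ℕ} (hm : 1 ≤ m) {t : ℚ} (ht : t ∈ Icc 0 1) :
    (Xi m ∩ Iic (lowerMap t)).ncard = (Xi (m - 2) ∩ Iic t).ncard := by
  have hle : lowerMap t ≤ 1 / 2 := (mapsTo_lowerMap ht).2
  calc (Xi m ∩ Iic (lowerMap t)).ncard
      = (Xi m ∩ Iic (1 / 2) ∩ Iic (lowerMap t)).ncard := by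
        rw [inter_assoc, Iic_inter_Iic, min_eq_right hle]
    _ = (lowerMap '' (Xi (m - 2) ∩ Iic t)).ncard := by
        rw [Xi_inter_Iic_half hm, strictMonoOn_lowerMap.image_inter_Iic Xi_subset_Icc ht]
    _ = (Xi (m - 2) ∩ Iic t).ncard :=
        (strictMonoOn_lowerMap.injOn.mono (inter_subset_left.trans Xi_subset_Icc)).ncard_image

theorem ncard_Xi_inter_Iic_upperMap {m : ℕ} (hm : 1 ≤ m) {t : ℚ} (ht : t ∈ Icc 0 1) :
    (Xi m ∩ Iic (upperMap t)).ncard + 1 = (Xi (m - 2)).ncard + (Xi (m - 1) ∩ Iic t).ncard := by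
  have hge : 1 / 2 ≤ upperMap t := (mapsTo_upperMap ht).1
  have hlower : Xi m ∩ Iic (upperMap t) ∩ Iic (1 / 2) = lowerMap '' Xi (m - 2) := by
    rw [inter_assoc, Iic_inter_Iic, min_eq_right hge, Xi_inter_Iic_half hm]
  have hupper : Xi m ∩ Iic (upperMap t) ∩ Ici (1 / 2) = upperMap '' (Xi (m - 1) ∩ Iic t) := by
    rw [inter_right_comm, Xi_inter_Ici_half hm,
      strictMonoOn_upperMap.image_inter_Iic Xi_subset_Icc ht]
  rw [← ncard_inter_Iic_add_ncard_inter_Ici ((Xi_finite m).inter_of_left _)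
      ⟨half_mem_Xi hm, hge⟩, hlower, hupper,
    (strictMonoOn_lowerMap.injOn.mono Xi_subset_Icc).ncard_image,
    (strictMonoOn_upperMap.injOn.mono (inter_subset_left.trans Xi_subset_Icc)).ncard_image]

theorem Xi_inter_Iic_one (m : ℕ) : Xi m ∩ Iic 1 = Xi m :=
  inter_eq_left.2 fun _ hx => (Xi_subset_Icc hx).2

theorem ncard_Xi_add_one {m : ℕ} (hm : 1 ≤ m) :
    (Xi m).ncard + 1 = (Xi (m - 2)).ncard + (Xi (m - 1)).ncard := by
  have h := ncard_Xi_inter_Iic_upperMap hm (t := 1) (by simp)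
  rwa [show upperMap 1 = 1 by norm_num [moebius], Xi_inter_Iic_one, Xi_inter_Iic_one] at h

theorem ncard_Xi : ∀ m, (Xi m).ncard = Nat.fib (m + 2) + 1
  | 0 => by simp [Xi_zero]
  | 1 => by
    have h : (Xi 1).ncard + 1 = (Xi 0).ncard + (Xi 0).ncard := ncard_Xi_add_one le_rfl
    rw [ncard_Xi 0] at h
    simpa [Nat.fib_add_two] using h
  | m + 2 => by
    have h : (Xi (m + 2)).ncard + 1 = (Xi m).ncard + (Xi (m + 1)).ncard :=
      ncard_Xi_add_one (by omega)
    rw [ncard_Xi m, ncard_Xi (m + 1)] at h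
    have hfib : Nat.fib (m + 2 + 2) = Nat.fib (m + 2) + Nat.fib (m + 1 + 2) := Nat.fib_add_two
    omega

theorem Filter.Tendsto.add_one_div_add_one {ι : Type*} {l : Filter ι} {a b : ι → ℝ} {ρ : ℝ}
    (hab : Tendsto (fun n => a n / b n) l (𝓝 ρ)) (hb : Tendsto b l atTop) :
    Tendsto (fun n => (a n + 1) / (b n + 1)) l (𝓝 ρ) := by
  have hinv : Tendsto (fun n => 1 / b n) l (𝓝 0) := tendsto_const_nhds.div_atTop hb
  have h := (hab.add hinv).div (tendsto_const_nhds.add hinv) (by norm_num : (1 : ℝ) + 0 ≠ 0)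
  rw [add_zero, add_zero, div_one] at h
  refine h.congr' ?_
  filter_upwards [hb.eventually_gt_atTop 0] with n hn
  simp only [Pi.div_apply]
  field_simp

theorem Filter.Tendsto.div_add_of_div_succ {u : ℕ → ℝ} {ρ : ℝ} (hu : ∀ n, u n ≠ 0)
    (h : Tendsto (fun n => u n / u (n + 1)) atTop (𝓝 ρ)) (k : ℕ) :
    Tendsto (fun n => u n / u (n + k)) atTop (𝓝 (ρ ^ k)) := by
  induction k with
  | zero => simp [div_self (hu _)]
  | succ k ih =>
    refine (ih.mul (h.comp (tendsto_add_atTop_nat k))).congr fun n => ?_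
    simp only [Function.comp_apply, ← add_assoc]
    rw [div_mul_div_cancel₀ (hu _)]

theorem tendsto_fib_add_two_atTop : Tendsto (fun n => (Nat.fib (n + 2) : ℝ)) atTop atTop :=
  tendsto_natCast_atTop_atTop.comp Nat.fib_add_two_strictMono.tendsto_atTop

theorem tendsto_ncard_Xi_atTop : Tendsto (fun m => ((Xi m).ncard : ℝ)) atTop atTop := by
  simp only [ncard_Xi, Nat.cast_add, Nat.cast_one]
  exact tendsto_atTop_add_const_right _ 1 tendsto_fib_add_two_atTop

theorem tendsto_one_div_ncard_Xi : Tendsto (fun m => 1 / ((Xi m).ncard : ℝ)) atTop (𝓝 0) :=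
  tendsto_const_nhds.div_atTop tendsto_ncard_Xi_atTop

theorem ncard_Xi_ne_zero (m : ℕ) : ((Xi m).ncard : ℝ) ≠ 0 := by
  rw [ncard_Xi]; positivity

theorem tendsto_ncard_Xi_div_succ :
    Tendsto (fun m => ((Xi m).ncard : ℝ) / (Xi (m + 1)).ncard) atTop (𝓝 φ⁻¹) := by
  simp only [ncard_Xi, Nat.cast_add, Nat.cast_one]
  refine Tendsto.add_one_div_add_one ?_ ?_
  · rw [inv_goldenRatio]
    exact tendsto_fib_div_fib_succ_atTop.comp (tendsto_add_atTop_nat 2)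
  · exact tendsto_fib_add_two_atTop.comp (tendsto_add_atTop_nat 1)

theorem tendsto_ncard_Xi_sub_div (j : ℕ) :
    Tendsto (fun m => ((Xi (m - j)).ncard : ℝ) / (Xi m).ncard) atTop (𝓝 (φ⁻¹ ^ j)) := by
  refine ((Tendsto.div_add_of_div_succ ncard_Xi_ne_zero tendsto_ncard_Xi_div_succ j).comp
    (tendsto_sub_atTop_nat j)).congr' ?_
  filter_upwards [eventually_ge_atTop j] with m hm
  simp only [Function.comp_apply, Nat.sub_add_cancel hm]

/-- The ratio whose limit as `m → ∞` is `M(t)`. -/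
noncomputable def xiDistrib (t : ℚ) (m : ℕ) : ℝ := ((Xi m ∩ Iic t).ncard : ℝ) / (Xi m).ncard

theorem tendsto_xiDistrib_zero : Tendsto (xiDistrib 0) atTop (𝓝 0) := by
  have hsingleton (m : ℕ) : Xi m ∩ Iic 0 = {0} :=
    Subset.antisymm (fun x hx => le_antisymm hx.2 (Xi_subset_Icc hx.1).1)
      (singleton_subset_iff.2 ⟨zero_mem_Xi m, mem_Iic.2 le_rfl⟩)
  refine tendsto_one_div_ncard_Xi.congr fun m => ?_
  rw [xiDistrib, hsingleton, ncard_singleton, Nat.cast_one]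

theorem tendsto_xiDistrib_one : Tendsto (xiDistrib 1) atTop (𝓝 1) :=
  tendsto_const_nhds.congr fun m => by
    rw [xiDistrib, Xi_inter_Iic_one, div_self (ncard_Xi_ne_zero m)]

theorem tendsto_xiDistrib_lowerMap {t : ℚ} (ht : t ∈ Icc 0 1) {M : ℝ}
    (h : Tendsto (xiDistrib t) atTop (𝓝 M)) :
    Tendsto (xiDistrib (lowerMap t)) atTop (𝓝 (φ⁻¹ ^ 2 * M)) := by
  rw [mul_comm]
  refine ((h.comp (tendsto_sub_atTop_nat 2)).mul (tendsto_ncard_Xi_sub_div 2)).congr' ?_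
  filter_upwards [eventually_ge_atTop 1] with m hm
  rw [Function.comp_apply, xiDistrib, xiDistrib, div_mul_div_cancel₀ (ncard_Xi_ne_zero _),
    ncard_Xi_inter_Iic_lowerMap hm ht]

theorem tendsto_xiDistrib_upperMap {t : ℚ} (ht : t ∈ Icc 0 1) {M : ℝ}
    (h : Tendsto (xiDistrib t) atTop (𝓝 M)) :
    Tendsto (xiDistrib (upperMap t)) atTop (𝓝 (φ⁻¹ ^ 2 + φ⁻¹ * M)) := by
  have hlim := ((tendsto_ncard_Xi_sub_div 2).sub tendsto_one_div_ncard_Xi).add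
    ((h.comp (tendsto_sub_atTop_nat 1)).mul (tendsto_ncard_Xi_sub_div 1))
  rw [sub_zero, pow_one, mul_comm M] at hlim
  refine hlim.congr' ?_
  filter_upwards [eventually_ge_atTop 1] with m hm
  have hcount : ((Xi m ∩ Iic (upperMap t)).ncard : ℝ) =
      (Xi (m - 2)).ncard + (Xi (m - 1) ∩ Iic t).ncard - 1 := by
    rw [eq_sub_iff_add_eq]; exact_mod_cast ncard_Xi_inter_Iic_upperMap hm ht
  rw [Function.comp_apply, xiDistrib, xiDistrib, div_mul_div_cancel₀ (ncard_Xi_ne_zero _),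
    hcount]
  ring

def HasMediantLimits (x y : ℚ) : Prop :=
  ∃ Mx My Mm : ℝ, Tendsto (xiDistrib x) atTop (𝓝 Mx) ∧ Tendsto (xiDistrib y) atTop (𝓝 My) ∧
    Tendsto (xiDistrib (mediant x y)) atTop (𝓝 Mm) ∧ Mm = Mx + (My - Mx) * φ⁻¹ ^ 2

theorem hasMediantLimits_zero_one : HasMediantLimits 0 1 := by
  have hmed : mediant 0 1 = upperMap 0 := by norm_num [mediant, moebius]
  refine ⟨0, 1, φ⁻¹ ^ 2, tendsto_xiDistrib_zero, tendsto_xiDistrib_one, ?_, by ring⟩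
  rw [hmed]
  simpa using tendsto_xiDistrib_upperMap (by simp) tendsto_xiDistrib_zero

theorem HasMediantLimits.moebius {a b c d : ℤ} (hdet : a * d - b * c = 1)
    (hpos : ∀ t ∈ Icc (0 : ℚ) 1, 0 < c * t + d) {α β : ℝ}
    (hM : ∀ t ∈ Icc (0 : ℚ) 1, ∀ M, Tendsto (xiDistrib t) atTop (𝓝 M) →
      Tendsto (xiDistrib (moebius a b c d t)) atTop (𝓝 (α + β * M)))
    {x y : ℚ} (hx : x ∈ Icc 0 1) (hy : y ∈ Icc 0 1) (hxy : x ≤ y) (h : HasMediantLimits x y) :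
    HasMediantLimits (moebius a b c d x) (moebius a b c d y) := by
  obtain ⟨Mx, My, Mm, hMx, hMy, hMm, hrel⟩ := h
  have hm : mediant x y ∈ Icc 0 1 :=
    ⟨hx.1.trans (mediant_mem_Icc hxy).1, (mediant_mem_Icc hxy).2.trans hy.2⟩
  refine ⟨α + β * Mx, α + β * My, α + β * Mm, hM x hx Mx hMx, hM y hy My hMy, ?_,
    by rw [hrel]; ring⟩
  rw [mediant_moebius hdet (hpos x hx) (hpos y hy)]
  exact hM _ hm Mm hMm

theorem isConsecutive_Xi_zero {x y : ℚ} (h : IsConsecutive (Xi 0) x y) : x = 0 ∧ y = 1 := by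
  obtain ⟨hx, hy, hlt, -⟩ := h
  rw [Xi_zero] at hx hy
  rcases hx with rfl | rfl <;> rcases hy with rfl | rfl <;>
    first | exact ⟨rfl, rfl⟩ | norm_num at hlt

theorem hasMediantLimits_of_isConsecutive (n : ℕ) {x y : ℚ} (hxy : IsConsecutive (Xi n) x y) :
    HasMediantLimits x y := by
  induction n using Nat.strong_induction_on generalizing x y with
  | _ n ih =>
  rcases Nat.eq_zero_or_pos n with rfl | hn
  · obtain ⟨rfl, rfl⟩ := isConsecutive_Xi_zero hxy
    exact hasMediantLimits_zero_one
  have hsplit : y ≤ 1 / 2 ∨ 1 / 2 ≤ x := by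
    by_contra! h
    exact hxy.2.2.2 _ (half_mem_Xi hn) h.symm
  rcases hsplit with hy | hx
  · obtain ⟨x', y', rfl, rfl, hxy'⟩ := hxy.exists_preimage strictMonoOn_lowerMap Xi_subset_Icc
      (Xi_inter_Iic_half hn) (hxy.2.2.1.le.trans hy) hy
    exact (ih _ (by omega) hxy').moebius (α := 0) (by norm_num)
      (fun t ht => by push_cast; linarith [ht.1])
      (fun t ht M hM => by rw [zero_add]; exact tendsto_xiDistrib_lowerMap ht hM)
      (Xi_subset_Icc hxy'.1) (Xi_subset_Icc hxy'.2.1) hxy'.2.2.1.le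
  · obtain ⟨x', y', rfl, rfl, hxy'⟩ := hxy.exists_preimage strictMonoOn_upperMap Xi_subset_Icc
      (Xi_inter_Ici_half hn) hx (hx.trans hxy.2.2.1.le)
    exact (ih _ (by omega) hxy').moebius (by norm_num)
      (fun t ht => by push_cast; linarith [ht.2])
      (fun t ht M hM => tendsto_xiDistrib_upperMap ht hM)
      (Xi_subset_Icc hxy'.1) (Xi_subset_Icc hxy'.2.1) hxy'.2.2.1.le

theorem inv_goldenRatio_sq : φ⁻¹ ^ 2 = (3 - √5) / 2 := by
  rw [inv_goldenRatio, neg_sq, goldenConj_sq, goldenConj]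
  ring

theorem distribution_mediant_relation_general
    (n : ℕ) (x y : ℚ) (hxy : IsConsecutive (Xi n) x y) :
    ∃ Mx My Mm : ℝ,
      Filter.Tendsto
        (fun m : ℕ => (({ξ ∈ Xi m | ξ ≤ x}).ncard : ℝ) / ((Xi m).ncard : ℝ))
        Filter.atTop (nhds Mx) ∧
      Filter.Tendsto
        (fun m : ℕ => (({ξ ∈ Xi m | ξ ≤ y}).ncard : ℝ) / ((Xi m).ncard : ℝ))
        Filter.atTop (nhds My) ∧
      Filter.Tendsto
        (fun m : ℕ =>
          (({ξ ∈ Xi m | ξ ≤ mediant x y}).ncard : ℝ) / ((Xi m).ncard : ℝ))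
        Filter.atTop (nhds Mm) ∧
      Mm = Mx + (My - Mx) * ((3 - Real.sqrt 5) / 2) := by
  obtain ⟨Mx, My, Mm, hMx, hMy, hMm, hrel⟩ := hasMediantLimits_of_isConsecutive n hxy
  exact ⟨Mx, My, Mm, hMx, hMy, hMm, inv_goldenRatio_sq ▸ hrel⟩

/-- for consecutive `x < y` in `Ξ_n`, the limits
`M(x), M(y), M(x ⊕ y)` of the distribution ratios exist and satisfy
`M(x ⊕ y) = M(x) + (M(y) - M(x)) · τ²` with `τ² = (3 - √5)/2`. -/
theorem distribution_mediant_relation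
    (n : ℕ) (hn : 1 ≤ n) (x y : ℚ) (hxy : IsConsecutive (Xi n) x y) :
    ∃ Mx My Mm : ℝ,
      Filter.Tendsto
        (fun m : ℕ => (({ξ ∈ Xi m | ξ ≤ x}).ncard : ℝ) / ((Xi m).ncard : ℝ))
        Filter.atTop (nhds Mx) ∧
      Filter.Tendsto
        (fun m : ℕ => (({ξ ∈ Xi m | ξ ≤ y}).ncard : ℝ) / ((Xi m).ncard : ℝ))
        Filter.atTop (nhds My) ∧
      Filter.Tendsto
        (fun m : ℕ =>
          (({ξ ∈ Xi m | ξ ≤ mediant x y}).ncard : ℝ) / ((Xi m).ncard : ℝ))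
        Filter.atTop (nhds Mm) ∧
      Mm = Mx + (My - Mx) * ((3 - Real.sqrt 5) / 2) :=
  distribution_mediant_relation_general n x y hxy
end

section
/- Minkowski's question mark function ?(x) = g_{1/2}(x) is the limit distribution function of the Stern–Brocot sequences: for every x ∈ (0,1), ?(x) = lim_{n→∞} #{ ξ ∈ ℱ_n : ξ ≤ x } / (2^n + 1), where 2^n + 1 = #ℱ_n. -/
open Set Filter

/-!
Listing `ℱ_n` in increasing order, `ℱ_{n+1}` arises from `ℱ_n` by inserting the mediant between
neighbours. Neighbours `a/b < c/d` stay unimodular (`bc - ad = 1`) with `b + d ≥ n + 2`, so the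
list is strictly increasing, has `2^n + 1` entries, and its gaps `1/(bd)` are at most `1/(n+1)`.
The mediant recursion then forces `g` to take the value `k/2^n` at the entry of index `k`. If
that entry is the largest one not exceeding `x`, the count in question is `k + 1`, and the entry
tends to `x`; hence the ratio `(2^n g(entry) + 1)/(2^n + 1)` tends to `g x` by continuity.
-/

open Topology

def IsUnimodular (x y : ℚ) : Prop := y.num * x.den - x.num * y.den = 1

namespace IsUnimodular

variable {x y : ℚ}

theorem lt (h : IsUnimodular x y) : x < y := by
  rw [Rat.lt_iff]; unfold IsUnimodular at h; omega

theorem sub_eq (h : IsUnimodular x y) : y - x = 1 / (x.den * y.den) := by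
  have hdet : (y.num : ℚ) * x.den - x.num * y.den = 1 := by exact_mod_cast h
  rw [eq_div_iff (by positivity), ← hdet]
  nth_rewrite 1 [← Rat.num_div_den x, ← Rat.num_div_den y]
  field_simp

theorem sub_le (h : IsUnimodular x y) {m : ℕ} (hm : m + 2 ≤ x.den + y.den) :
    y - x ≤ 1 / (m + 1) := by
  have hprod : m + 1 ≤ x.den * y.den := by nlinarith [x.pos, y.pos]
  rw [h.sub_eq]
  gcongr
  exact_mod_cast hprod

theorem isCoprime_num_add_num (h : IsUnimodular x y) :
    IsCoprime (x.num + y.num) ((x.den + y.den : ℕ) : ℤ) :=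
  ⟨x.den, -x.num, by unfold IsUnimodular at h; push_cast; linear_combination h⟩

theorem num_mediant (h : IsUnimodular x y) : (mediant x y).num = x.num + y.num :=
  Rat.num_div_eq_of_coprime (by positivity)
    (Int.isCoprime_iff_gcd_eq_one.mp h.isCoprime_num_add_num)

theorem den_mediant (h : IsUnimodular x y) : (mediant x y).den = x.den + y.den := by
  have hm : mediant x y = ((x.num + y.num : ℤ) : ℚ) / (((x.den + y.den : ℕ) : ℤ) : ℚ) := rfl
  have := Rat.den_div_eq_of_coprime (by positivity)
    (Int.isCoprime_iff_gcd_eq_one.mp h.isCoprime_num_add_num)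
  rw [hm]
  omega

theorem left_mediant (h : IsUnimodular x y) : IsUnimodular x (mediant x y) := by
  unfold IsUnimodular
  rw [h.num_mediant, h.den_mediant]
  unfold IsUnimodular at h
  push_cast
  linear_combination h

theorem mediant_right (h : IsUnimodular x y) : IsUnimodular (mediant x y) y := by
  unfold IsUnimodular
  rw [h.num_mediant, h.den_mediant]
  unfold IsUnimodular at h
  push_cast
  linear_combination h

end IsUnimodular

def insertMediants : List ℚ → List ℚ
  | x :: y :: t => x :: mediant x y :: insertMediants (y :: t)
  | l => l

theorem isChain_insertMediants {R S : ℚ → ℚ → Prop}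
    (hleft : ∀ x y, R x y → S x (mediant x y)) (hright : ∀ x y, R x y → S (mediant x y) y) :
    ∀ {l : List ℚ}, l.IsChain R → (insertMediants l).IsChain S
  | [], _ | [_], _ => by simp [insertMediants]
  | [x, y], h => by simp_all [insertMediants]
  | x :: y :: z :: t, h => by
    rw [List.isChain_cons_cons] at h
    have ih := isChain_insertMediants hleft hright h.2
    simp only [insertMediants] at ih ⊢
    exact .cons_cons (hleft x y h.1) (.cons_cons (hright x y h.1) ih)

theorem length_insertMediants : ∀ l : List ℚ, (insertMediants l).length = 2 * l.length - 1
  | [] | [_] => rfl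
  | _ :: y :: t => by
    simp only [insertMediants, List.length_cons, length_insertMediants (y :: t)]
    omega

theorem getElem_insertMediants_two_mul : ∀ (l : List ℚ) (k : ℕ) (hk : k < l.length)
    (hk' : 2 * k < (insertMediants l).length), (insertMediants l)[2 * k] = l[k]
  | [_], 0, _, _ => rfl
  | _ :: _ :: _, 0, _, _ => rfl
  | x :: y :: t, k + 1, hk, _ => by
    simp only [insertMediants, show 2 * (k + 1) = 2 * k + 1 + 1 by ring, List.getElem_cons_succ]
    exact getElem_insertMediants_two_mul (y :: t) k (by simpa using hk) _

theorem getElem_insertMediants_two_mul_add_one : ∀ (l : List ℚ) (k : ℕ) (hk : k + 1 < l.length)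
    (hk' : 2 * k + 1 < (insertMediants l).length),
    (insertMediants l)[2 * k + 1] = mediant l[k] l[k + 1]
  | _ :: _ :: _, 0, _, _ => rfl
  | x :: y :: t, k + 1, hk, _ => by
    simp only [insertMediants, show 2 * (k + 1) + 1 = 2 * k + 1 + 1 + 1 by ring,
      List.getElem_cons_succ]
    exact getElem_insertMediants_two_mul_add_one (y :: t) k (by simpa using hk) _

theorem mem_insertMediants {l : List ℚ} {z : ℚ} :
    z ∈ insertMediants l ↔ z ∈ l ∨ ∃ k, ∃ hk : k + 1 < l.length, z = mediant l[k] l[k + 1] := by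
  have hlen := length_insertMediants l
  constructor
  · intro hz
    obtain ⟨i, hi, rfl⟩ := List.getElem_of_mem hz
    obtain ⟨k, rfl | rfl⟩ := Nat.even_or_odd' i
    · left
      rw [getElem_insertMediants_two_mul l k (by omega)]
      exact List.getElem_mem _
    · right
      exact ⟨k, by omega, getElem_insertMediants_two_mul_add_one l k (by omega) _⟩
  · rintro (hz | ⟨k, hk, rfl⟩)
    · obtain ⟨k, hk, rfl⟩ := List.getElem_of_mem hz
      rw [← getElem_insertMediants_two_mul l k hk (by omega)]
      exact List.getElem_mem _
    · rw [← getElem_insertMediants_two_mul_add_one l k hk (by omega)]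
      exact List.getElem_mem _

theorem isConsecutive_setOf_mem_iff {l : List ℚ} (hl : l.SortedLT) {x y : ℚ} :
    IsConsecutive {a | a ∈ l} x y ↔ ∃ k, ∃ hk : k + 1 < l.length, l[k] = x ∧ l[k + 1] = y := by
  constructor
  · rintro ⟨hx, hy, hxy, hbetween⟩
    obtain ⟨i, hi, rfl⟩ := List.getElem_of_mem hx
    obtain ⟨j, hj, rfl⟩ := List.getElem_of_mem hy
    rw [hl.getElem_lt_getElem_iff] at hxy
    obtain rfl | hsucc : j = i + 1 ∨ i + 1 < j := by omega
    · exact ⟨i, hj, rfl, rfl⟩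
    · refine (hbetween l[i + 1] (List.getElem_mem _) ?_).elim
      simp only [hl.getElem_lt_getElem_iff]
      omega
  · rintro ⟨k, hk, rfl, rfl⟩
    refine ⟨List.getElem_mem _, List.getElem_mem _, by simp [hl.getElem_lt_getElem_iff], ?_⟩
    rintro z hz
    obtain ⟨i, hi, rfl⟩ := List.getElem_of_mem hz
    simp only [hl.getElem_lt_getElem_iff]
    omega

theorem List.SortedLE.exists_countP_eq_succ_of_antitone {α : Type*} [Preorder α] {l : List α}
    (hl : l.SortedLE) {p : α → Prop} [DecidablePred p] (hp : Antitone p)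
    (htrue : ∃ a ∈ l, p a) (hfalse : ∃ a ∈ l, ¬ p a) :
    ∃ k, ∃ hk : k + 1 < l.length, p l[k] ∧ ¬ p l[k + 1] ∧ l.countP (fun a => p a) = k + 1 := by
  replace hl := hl.pairwise
  induction l with
  | nil => simp at htrue
  | cons a t ih =>
    rw [List.pairwise_cons] at hl
    have ha : p a := by
      obtain ⟨b, hb, hpb⟩ := htrue
      rcases List.mem_cons.mp hb with rfl | hb
      exacts [hpb, hp (hl.1 b hb) hpb]
    obtain ⟨c, hc, hpc⟩ := hfalse
    have hct : c ∈ t := (List.mem_cons.mp hc).resolve_left (by rintro rfl; exact hpc ha)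
    obtain ⟨b, t', rfl⟩ := List.exists_cons_of_ne_nil (List.ne_nil_of_mem hct)
    by_cases hb : p b
    · obtain ⟨k, hk, hpk, hpk', hcount⟩ := ih ⟨b, by simp, hb⟩ ⟨c, hct, hpc⟩ hl.2
      exact ⟨k + 1, by simpa using hk, hpk, hpk', by simp [ha, hcount]⟩
    · have hrest : (b :: t').countP (fun a => p a) = 0 := by
        rw [List.countP_eq_zero]
        rintro d hd hpd
        rcases List.mem_cons.mp hd with rfl | hd
        · exact hb (by simpa using hpd)
        · exact hb (hp ((List.pairwise_cons.mp hl.2).1 d hd) (by simpa using hpd))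
      exact ⟨0, by simp, ha, hb, by simp [ha, hrest]⟩

theorem List.Nodup.ncard_setOf_mem {α : Type*} {l : List α} (hl : l.Nodup) :
    {a | a ∈ l}.ncard = l.length := by
  classical
  rw [← List.coe_toFinset, Set.ncard_coe_finset, List.toFinset_card_of_nodup hl]

def sternBrocotList : ℕ → List ℚ
  | 0 => [0, 1]
  | n + 1 => insertMediants (sternBrocotList n)

theorem isChain_sternBrocotList (n : ℕ) :
    (sternBrocotList n).IsChain fun x y => IsUnimodular x y ∧ n + 2 ≤ x.den + y.den := by
  induction n with
  | zero => simp [sternBrocotList, IsUnimodular]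
  | succ n ih =>
    refine isChain_insertMediants ?_ ?_ ih <;> rintro x y ⟨hxy, hden⟩
    · exact ⟨hxy.left_mediant, by linarith [hxy.den_mediant, x.den_pos]⟩
    · exact ⟨hxy.mediant_right, by linarith [hxy.den_mediant, y.den_pos]⟩

theorem sortedLT_sternBrocotList (n : ℕ) : (sternBrocotList n).SortedLT :=
  ((isChain_sternBrocotList n).imp fun _ _ h => h.1.lt).sortedLT

theorem length_sternBrocotList (n : ℕ) : (sternBrocotList n).length = 2 ^ n + 1 := by
  induction n with
  | zero => rfl
  | succ n ih =>
    rw [sternBrocotList, length_insertMediants, ih, pow_succ]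
    omega

theorem sternBrocot_eq_setOf_mem (n : ℕ) : sternBrocot n = {a | a ∈ sternBrocotList n} := by
  induction n with
  | zero => ext; simp [sternBrocot, sternBrocotList]
  | succ n ih =>
    ext z
    simp only [sternBrocot, sternBrocotList, ih, Set.mem_union, Set.mem_ofPred_eq,
      mem_insertMediants, isConsecutive_setOf_mem_iff (sortedLT_sternBrocotList n)]
    constructor
    · rintro (hz | ⟨_, _, ⟨k, hk, rfl, rfl⟩, rfl⟩)
      exacts [.inl hz, .inr ⟨k, hk, rfl⟩]
    · rintro (hz | ⟨k, hk, rfl⟩)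
      exacts [.inl hz, .inr ⟨_, _, ⟨k, hk, rfl, rfl⟩, rfl⟩]

theorem sternBrocot_mono : Monotone sternBrocot :=
  monotone_nat_of_le_succ fun _ => Set.subset_union_left

section QuestionMark

variable (g : ℝ → ℝ) (hg0 : g 0 = 0) (hg1 : g 1 = 1)
  (hrec : ∀ n : ℕ, ∀ x y : ℚ, IsConsecutive (sternBrocot n) x y →
    g ((mediant x y : ℚ) : ℝ) = g (x : ℝ) + (1 / 2 : ℝ) * (g (y : ℝ) - g (x : ℝ)))
include hg0 hg1 hrec

theorem apply_getElem_sternBrocotList (n k : ℕ) (hk : k < (sternBrocotList n).length) :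
    g (sternBrocotList n)[k] = k / 2 ^ n := by
  induction n generalizing k with
  | zero =>
    obtain rfl | rfl : k = 0 ∨ k = 1 := by simp [sternBrocotList] at hk; omega
    · simp [sternBrocotList, hg0]
    · simp [sternBrocotList, hg1]
  | succ n ih =>
    have hlen := length_sternBrocotList (n + 1)
    have hlen' := length_sternBrocotList n
    simp only [sternBrocotList] at hk hlen ⊢
    obtain ⟨j, rfl | rfl⟩ := Nat.even_or_odd' k
    · rw [getElem_insertMediants_two_mul _ j (by omega), ih j (by omega), pow_succ]
      push_cast
      field_simp
    · have hj : j + 1 < (sternBrocotList n).length := by omega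
      have hcons :
          IsConsecutive (sternBrocot n) (sternBrocotList n)[j] (sternBrocotList n)[j + 1] := by
        rw [sternBrocot_eq_setOf_mem, isConsecutive_setOf_mem_iff (sortedLT_sternBrocotList n)]
        exact ⟨j, hj, rfl, rfl⟩
      rw [getElem_insertMediants_two_mul_add_one _ j hj, hrec n _ _ hcons, ih j (by omega),
        ih (j + 1) hj, pow_succ]
      push_cast
      field_simp
      ring

/-- The witness `q` is the largest element of `ℱ_n` not exceeding `x`. -/
theorem exists_rat_approx_ncard_sternBrocot_le {x : ℝ} (hx0 : 0 ≤ x) (hx1 : x < 1) (n : ℕ) :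
    ∃ q : ℚ, (q : ℝ) ≤ x ∧ x - q ≤ 1 / (n + 1) ∧
      (({ξ ∈ sternBrocot n | (ξ : ℝ) ≤ x}).ncard : ℝ) = 2 ^ n * g q + 1 := by
  classical
  have hmem : ∀ q, q ∈ sternBrocot n ↔ q ∈ sternBrocotList n := by
    simp [sternBrocot_eq_setOf_mem]
  obtain ⟨k, hk, hkx, hxk, hcount⟩ :=
    (sortedLT_sternBrocotList n).sortedLE.exists_countP_eq_succ_of_antitone
      (p := fun q : ℚ => (q : ℝ) ≤ x) (fun a b hab hb => (Rat.cast_le.mpr hab).trans hb)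
      ⟨0, (hmem 0).mp (sternBrocot_mono (Nat.zero_le n) (.inl rfl)), by simpa using hx0⟩
      ⟨1, (hmem 1).mp (sternBrocot_mono (Nat.zero_le n) (.inr rfl)), by simpa using hx1⟩
  obtain ⟨hunimod, hden⟩ := (isChain_sternBrocotList n).getElem k hk
  have hgap : ((sternBrocotList n)[k + 1] : ℝ) - (sternBrocotList n)[k] ≤ 1 / (n + 1) := by
    simpa using Rat.cast_le (K := ℝ) |>.mpr (hunimod.sub_le hden)
  refine ⟨_, hkx, by linarith, ?_⟩
  have hset : {ξ ∈ sternBrocot n | (ξ : ℝ) ≤ x} =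
      {a | a ∈ (sternBrocotList n).filter fun q : ℚ => (q : ℝ) ≤ x} := by
    ext q
    simp [hmem]
  rw [hset, ((sortedLT_sternBrocotList n).nodup.filter _).ncard_setOf_mem,
    ← List.countP_eq_length_filter, hcount, apply_getElem_sternBrocotList g hg0 hg1 hrec]
  push_cast
  field_simp

end QuestionMark

theorem Filter.Tendsto.mul_add_one_div_add_one {ι : Type*} {l : Filter ι} {u b : ι → ℝ} {L : ℝ}
    (hu : Tendsto u l (𝓝 L)) (hb : Tendsto b l atTop) :
    Tendsto (fun i => (b i * u i + 1) / (b i + 1)) l (𝓝 L) := by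
  have hinv : Tendsto (fun i => (b i + 1)⁻¹) l (𝓝 0) :=
    (tendsto_atTop_add_const_right _ 1 hb).inv_tendsto_atTop
  have hlim := hu.sub ((hu.sub_const 1).mul hinv)
  rw [mul_zero, sub_zero] at hlim
  refine hlim.congr' ?_
  filter_upwards [hb.eventually_gt_atTop 0] with i hi
  field_simp
  ring

/-- Minkowski's question mark function `? = g_{1/2}` is the limit
distribution function of the Stern–Brocot sequences, whose cardinalities are
`#ℱ_n = 2^n + 1`. -/
theorem minkowski_is_distribution_of_sternBrocot
    (g : ℝ → ℝ)
    (hg0 : g 0 = 0) (hg1 : g 1 = 1)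
    (hgc : ContinuousOn g (Set.Icc (0 : ℝ) 1))
    (hrec : ∀ n : ℕ, ∀ x y : ℚ, IsConsecutive (sternBrocot n) x y →
      g ((mediant x y : ℚ) : ℝ) =
        g (x : ℝ) + (1 / 2 : ℝ) * (g (y : ℝ) - g (x : ℝ))) :
    (∀ n : ℕ, (sternBrocot n).ncard = 2 ^ n + 1) ∧
      ∀ x ∈ Set.Ioo (0 : ℝ) 1,
        Filter.Tendsto
          (fun n : ℕ =>
            (({ξ ∈ sternBrocot n | (ξ : ℝ) ≤ x}).ncard : ℝ) / ((2 : ℝ) ^ n + 1))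
          Filter.atTop (nhds (g x)) := by
  refine ⟨fun n => ?_, fun x ⟨hx0, hx1⟩ => ?_⟩
  · rw [sternBrocot_eq_setOf_mem, (sortedLT_sternBrocotList n).nodup.ncard_setOf_mem,
      length_sternBrocotList]
  choose q hqx hxq hcount using
    exists_rat_approx_ncard_sternBrocot_le g hg0 hg1 hrec hx0.le hx1
  have hlow : Tendsto (fun n : ℕ => x - 1 / ((n : ℝ) + 1)) atTop (𝓝 x) := by
    simpa using tendsto_one_div_add_atTop_nhds_zero_nat.const_sub x
  have hq : Tendsto (fun n => (q n : ℝ)) atTop (𝓝 x) :=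
    tendsto_of_tendsto_of_tendsto_of_le_of_le hlow tendsto_const_nhds
      (fun n => by linarith [hxq n]) hqx
  have hgq : Tendsto (fun n => g (q n)) atTop (𝓝 (g x)) :=
    (hgc.continuousAt (Icc_mem_nhds hx0 hx1)).tendsto.comp hq
  simpa only [hcount] using
    hgq.mul_add_one_div_add_one (tendsto_pow_atTop_atTop_of_one_lt one_lt_two)
end
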